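/- arXiv:2510.17195 — 4 statements merged into one kernel-verified Lean document; each statement's English description precedes it below -/
import Mathlib

section
/- (Proposition 4.16 for k = 2) Fix λ ∈ (0,1). The following are equivalent: (a) the pair power (C_{φ₁,ω₁}, C_{φ₂,ω₂})² is densely defined, i.e. the set {f ∈ L²(μ) : ωⱼ·(f∘φⱼ) ∈ L²(μ) for j = 1,2, and ωᵢ·((ωⱼ·(f∘φⱼ))∘φᵢ) ∈ L²(μ) for all i,j ∈ {1,2}} is dense in L²(μ); (b) the set {f ∈ L²(μ) : ω_λ¹·(f∘φ₁) ∈ L²(μ) and ω_λ²·(f∘φ₂) ∈ L²(μ)} (the domain of the λ-spherical mean transform of the pair) is dense in L²(μ). -/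
open MeasureTheory
open scoped ENNReal NNReal

/-- The weight of the λ-mean transform: `(s + λ(1-s))·ω` where
`s(x) = √(h(x)/h(φ(x)))` if `ω x ≠ 0`, `h x < ∞` and `0 < h (φ x) < ∞`, else `0`. -/
noncomputable def meanWeight {X : Type*} (φ : X → X) (ω : X → ℂ) (h : X → ℝ≥0∞)
    (l : ℝ) (x : X) : ℂ :=
  let s : ℝ := if ω x ≠ 0 ∧ h x < ⊤ ∧ 0 < h (φ x) ∧ h (φ x) < ⊤ then
      Real.sqrt ((h x).toReal / (h (φ x)).toReal) else 0
  ((s + l * (1 - s) : ℝ) : ℂ) * ω x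

open Set

namespace SMTaux

variable {X : Type*} [MeasurableSpace X] {μ : Measure X}

/-- The value `s(x)` appearing in the mean weight. -/
noncomputable def svalFun {X : Type*} (φ : X → X) (v : X → ℂ) (h : X → ℝ≥0∞) (x : X) : ℝ :=
  if v x ≠ 0 ∧ h x < ⊤ ∧ 0 < h (φ x) ∧ h (φ x) < ⊤ then
    Real.sqrt ((h x).toReal / (h (φ x)).toReal) else 0

lemma meanWeight_eq {X : Type*} (φ : X → X) (v : X → ℂ) (h : X → ℝ≥0∞) (l : ℝ) :
    meanWeight φ v h l
      = fun x => ((svalFun φ v h x + l * (1 - svalFun φ v h x) : ℝ) : ℂ) * v x := rfl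

lemma svalFun_nonneg {X : Type*} (φ : X → X) (v : X → ℂ) (h : X → ℝ≥0∞) (x : X) :
    0 ≤ svalFun φ v h x := by
  unfold svalFun
  split
  · exact Real.sqrt_nonneg _
  · exact le_rfl

lemma measurable_svalFun {φ : X → X} (hφ : Measurable φ) {v : X → ℂ} (hv : Measurable v)
    {h : X → ℝ≥0∞} (hh : Measurable h) : Measurable (svalFun φ v h) := by
  have hC : MeasurableSet {x | v x ≠ 0 ∧ h x < ⊤ ∧ 0 < h (φ x) ∧ h (φ x) < ⊤} := by
    refine MeasurableSet.inter ?_ (MeasurableSet.inter ?_ (MeasurableSet.inter ?_ ?_))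
    · exact hv (measurableSet_singleton 0) |>.compl
    · exact hh measurableSet_Iio
    · exact (hh.comp hφ) measurableSet_Ioi
    · exact (hh.comp hφ) measurableSet_Iio
  exact Measurable.ite hC
    (Real.continuous_sqrt.measurable.comp
      ((ENNReal.measurable_toReal.comp hh).div
        (ENNReal.measurable_toReal.comp (hh.comp hφ))))
    measurable_const

/-- The "division by `h`" density. -/
noncomputable def rfun {X : Type*} (h : X → ℝ≥0∞) (x : X) : ℝ≥0∞ :=
  if 0 < h x ∧ h x < ⊤ then (h x)⁻¹ else 0

lemma measurable_rfun {h : X → ℝ≥0∞} (hh : Measurable h) : Measurable (rfun h) := by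
  have hC : MeasurableSet {x | 0 < h x ∧ h x < ⊤} :=
    MeasurableSet.inter (hh measurableSet_Ioi) (hh measurableSet_Iio)
  exact Measurable.ite hC hh.inv measurable_const


lemma eLpNorm_two_eq (F : X → ℂ) :
    eLpNorm F 2 μ = (∫⁻ x, (‖F x‖₊ : ℝ≥0∞) ^ 2 ∂μ) ^ (1/2 : ℝ) := by
  rw [eLpNorm_eq_lintegral_rpow_enorm_toReal two_ne_zero ENNReal.ofNat_ne_top]
  congr 1
  refine lintegral_congr fun x => ?_
  rw [ENNReal.toReal_ofNat, ← ENNReal.rpow_natCast]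
  norm_num; rfl

lemma memLp_two_iff' {F : X → ℂ} (hF : AEStronglyMeasurable F μ) :
    MemLp F 2 μ ↔ ∫⁻ x, (‖F x‖₊ : ℝ≥0∞) ^ 2 ∂μ < ⊤ := by
  constructor
  · intro h
    have h2 := h.2
    rw [eLpNorm_two_eq, lt_top_iff_ne_top] at h2
    rw [lt_top_iff_ne_top]
    intro hc
    rw [hc] at h2
    simp at h2
  · intro h
    refine ⟨hF, ?_⟩
    rw [eLpNorm_two_eq]
    exact ENNReal.rpow_lt_top_of_nonneg (by norm_num) h.ne

lemma dense_iff_ae_lt_top [SigmaFinite μ] {G : X → ℝ≥0∞} (hG : Measurable G) :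
    Dense {f : Lp ℂ 2 μ | ∫⁻ x, (‖f x‖₊ : ℝ≥0∞) ^ 2 * G x ∂μ < ⊤} ↔ ∀ᵐ x ∂μ, G x < ⊤ := by
  constructor
  · intro hd
    by_contra hae
    have hT : MeasurableSet {x | G x = ⊤} := hG (measurableSet_singleton ⊤)
    have hTpos : 0 < μ {x | G x = ⊤} := by
      rw [pos_iff_ne_zero]
      intro h0
      refine hae ?_
      rw [ae_iff]
      convert h0 using 2
      ext x; simp [lt_top_iff_ne_top]
    obtain ⟨S, hSm, hST, hSpos, hSfin⟩ := Measure.exists_subset_measure_lt_top hT hTpos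
    -- the indicator of S
    set g : Lp ℂ 2 μ := (memLp_indicator_const 2 hSm (1:ℂ) (Or.inr hSfin.ne)).toLp _ with hg
    -- every element of the set is far from g
    set r : ℝ := ((μ S) ^ (1/2:ℝ)).toReal with hr
    have hrpos : 0 < r := by
      rw [hr]
      apply ENNReal.toReal_pos
      · exact (ENNReal.rpow_pos hSpos hSfin.ne).ne'
      · exact (ENNReal.rpow_lt_top_of_nonneg (by norm_num) hSfin.ne).ne
    obtain ⟨f, hfd, hf⟩ := Metric.dense_iff.mp hd g r hrpos
    -- f vanishes a.e. on S
    have haef : ∀ᵐ x ∂μ, x ∈ S → f x = 0 := by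
      have hm : AEMeasurable (fun x => (‖f x‖₊ : ℝ≥0∞) ^ 2 * G x) μ :=
        (((Lp.aestronglyMeasurable f).aemeasurable.nnnorm.coe_nnreal_ennreal.pow_const 2).mul hG.aemeasurable)
      filter_upwards [ae_lt_top' hm hf.ne] with x hx hxS
      have hGx : G x = ⊤ := hST hxS
      rw [hGx] at hx
      by_contra hfx
      have : (‖f x‖₊ : ℝ≥0∞) ^ 2 ≠ 0 := by simpa using hfx
      rw [ENNReal.mul_top this] at hx
      exact absurd hx (by simp)
    -- lower bound on the distance
    have hdist : r ≤ dist f g := by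
      rw [Lp.dist_def, eLpNorm_two_eq, hr]
      apply ENNReal.toReal_mono
      · exact (ENNReal.rpow_lt_top_of_nonneg (by norm_num)
          (by
            have := Lp.eLpNorm_ne_top (f - g)
            rw [eLpNorm_congr_ae (Lp.coeFn_sub f g), eLpNorm_two_eq] at this
            intro hc
            rw [hc] at this
            simp at this)).ne
      apply ENNReal.rpow_le_rpow _ (by norm_num)
      calc μ S = ∫⁻ _x in S, 1 ∂μ := by simp
        _ ≤ ∫⁻ x in S, (‖(⇑f - ⇑g) x‖₊ : ℝ≥0∞) ^ 2 ∂μ := by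
            refine lintegral_mono_ae ?_
            rw [ae_restrict_iff' hSm]
            filter_upwards [haef, (memLp_indicator_const 2 hSm (1:ℂ)
              (Or.inr hSfin.ne)).coeFn_toLp] with x hx hgx hxS
            have : (⇑f - ⇑g) x = -1 := by
              simp [hx hxS, hg, hgx, indicator_of_mem hxS]
            rw [this]; simp
        _ ≤ ∫⁻ x, (‖(⇑f - ⇑g) x‖₊ : ℝ≥0∞) ^ 2 ∂μ := setLIntegral_le_lintegral _ _
    rw [Metric.mem_ball] at hfd
    linarith
  · intro hae
    rw [Metric.dense_iff]
    intro f ε hε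
    have hsqm : AEMeasurable (fun x => (‖f x‖₊ : ℝ≥0∞) ^ 2) μ :=
      (Lp.aestronglyMeasurable f).aemeasurable.nnnorm.coe_nnreal_ennreal.pow_const 2
    have hfin : ∫⁻ x, (‖f x‖₊ : ℝ≥0∞) ^ 2 ∂μ < ⊤ :=
      (memLp_two_iff' (Lp.aestronglyMeasurable f)).mp (Lp.memLp f)
    set ν := μ.withDensity (fun x => (‖f x‖₊ : ℝ≥0∞) ^ 2) with hν
    set s : ℕ → Set X := fun n => {x | (n : ℝ≥0∞) ≤ G x} with hs
    have hsm : ∀ n, MeasurableSet (s n) := fun n => measurableSet_le measurable_const hG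
    have hanti : Antitone s := by
      intro m n hmn x hx
      simp only [hs, Set.mem_setOf_eq] at hx ⊢
      exact le_trans (by exact_mod_cast hmn) hx
    have hInt : ⋂ n, s n = {x | G x = ⊤} := by
      ext x
      simp only [Set.mem_iInter, Set.mem_setOf_eq, hs]
      constructor
      · intro hx
        by_contra hne
        obtain ⟨n, hn⟩ := ENNReal.exists_nat_gt hne
        exact absurd (hx n) (not_le.mpr hn)
      · intro hx n; rw [hx]; exact le_top
    have htend : Filter.Tendsto (fun n => ν (s n)) Filter.atTop (nhds 0) := by
      have h0 : ν (⋂ n, s n) = 0 := by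
        rw [hInt]
        refine withDensity_absolutelyContinuous μ _ ?_
        have h' := ae_iff.mp hae
        rwa [show {x | ¬ G x < ⊤} = {x | G x = ⊤} from by ext x; simp [lt_top_iff_ne_top]] at h'
      have := tendsto_measure_iInter_atTop (μ := ν) (fun n => (hsm n).nullMeasurableSet) hanti
        ⟨0, by
          refine ne_of_lt (lt_of_le_of_lt (measure_mono (Set.subset_univ _)) ?_)
          rw [hν, withDensity_apply _ MeasurableSet.univ, Measure.restrict_univ]
          exact hfin⟩
      rwa [h0] at this
    have hδpos : (0 : ℝ≥0∞) < ENNReal.ofReal (ε ^ 2) := by positivity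
    obtain ⟨n, hn⟩ := (htend.eventually_lt_const hδpos).exists
    set A : Set X := (s n)ᶜ with hA
    have hAm : MeasurableSet A := (hsm n).compl
    have hgmem : MemLp (A.indicator ⇑f) 2 μ := (Lp.memLp f).indicator hAm
    set g : Lp ℂ 2 μ := hgmem.toLp _ with hg
    refine ⟨g, Metric.mem_ball.mpr ?_, ?_⟩
    · -- dist g f < ε
      rw [dist_comm, Lp.dist_def, eLpNorm_two_eq]
      have hfg : (⇑f - ⇑g) =ᵐ[μ] (s n).indicator ⇑f := by
        filter_upwards [hgmem.coeFn_toLp] with x hx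
        simp only [Pi.sub_apply, hg, hx]
        by_cases hxA : x ∈ A
        · rw [Set.indicator_of_mem hxA, Set.indicator_of_notMem (by simpa [hA] using hxA),
            sub_self]
        · rw [Set.indicator_of_notMem hxA, Set.indicator_of_mem (by simpa [hA] using hxA),
            sub_zero]
      have hlt : ∫⁻ x, (‖(⇑f - ⇑g) x‖₊ : ℝ≥0∞) ^ 2 ∂μ < ENNReal.ofReal (ε ^ 2) := by
        refine lt_of_le_of_lt ?_ hn
        rw [hν, withDensity_apply _ (hsm n), ← lintegral_indicator (hsm n)]
        refine lintegral_mono_ae ?_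
        filter_upwards [hfg] with x hx
        rw [hx]
        by_cases hxs : x ∈ s n
        · rw [Set.indicator_of_mem hxs, Set.indicator_of_mem hxs]
        · rw [Set.indicator_of_notMem hxs, Set.indicator_of_notMem hxs]; simp
      have h2 : (∫⁻ x, (‖(⇑f - ⇑g) x‖₊ : ℝ≥0∞) ^ 2 ∂μ) ^ (1/2 : ℝ) < ENNReal.ofReal ε := by
        have := ENNReal.rpow_lt_rpow hlt (by norm_num : (0:ℝ) < 1/2)
        refine lt_of_lt_of_le this (le_of_eq ?_)
        rw [← Real.rpow_natCast ε 2, ← ENNReal.ofReal_rpow_of_pos (by positivity),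
          ← ENNReal.rpow_mul]
        norm_num
      exact ENNReal.toReal_lt_of_lt_ofReal h2
    · -- membership
      show ∫⁻ x, (‖g x‖₊ : ℝ≥0∞) ^ 2 * G x ∂μ < ⊤
      have : ∫⁻ x, (‖g x‖₊ : ℝ≥0∞) ^ 2 * G x ∂μ
          = ∫⁻ x, (‖A.indicator (⇑f) x‖₊ : ℝ≥0∞) ^ 2 * G x ∂μ := by
        refine lintegral_congr_ae ?_
        filter_upwards [hgmem.coeFn_toLp] with x hx
        rw [← hg] at hx
        rw [hx]
      rw [this]
      have hle : ∀ x, (‖A.indicator (⇑f) x‖₊ : ℝ≥0∞) ^ 2 * G x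
          ≤ (n : ℝ≥0∞) * (‖f x‖₊ : ℝ≥0∞) ^ 2 := by
        intro x
        by_cases hxA : x ∈ A
        · rw [Set.indicator_of_mem hxA]
          have hGx : G x < n := by
            have := hxA
            simp only [hA, Set.mem_compl_iff, hs, Set.mem_setOf_eq, not_le] at this
            exact this
          rw [mul_comm]
          exact mul_le_mul' hGx.le le_rfl
        · rw [Set.indicator_of_notMem hxA]
          simp
      refine lt_of_le_of_lt (lintegral_mono hle) ?_
      rw [lintegral_const_mul' _ _ (by simp : (n : ℝ≥0∞) ≠ ⊤)]
      exact ENNReal.mul_lt_top (by simp) hfin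

/-- If the pushforward of `|v|²μ` by `φ` is absolutely continuous w.r.t. `μ`, then
`v · (a ∘ φ)` only depends on the `μ`-class of `a`. -/
lemma ae_comp_eq {φ : X → X} (hφ : Measurable φ) {v : X → ℂ} (hv : Measurable v)
    (hac : (μ.withDensity fun x => (‖v x‖₊ : ℝ≥0∞) ^ 2).map φ ≪ μ)
    {a b : X → ℂ} (hab : a =ᵐ[μ] b) :
    (fun x => v x * a (φ x)) =ᵐ[μ] (fun x => v x * b (φ x)) := by
  set N := toMeasurable μ {x | a x ≠ b x} with hN
  have hNm : MeasurableSet N := measurableSet_toMeasurable _ _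
  have hNnull : μ N = 0 := by
    rw [hN, measure_toMeasurable]
    exact ae_iff.mp hab
  have hmap : (μ.withDensity fun x => (‖v x‖₊ : ℝ≥0∞) ^ 2).map φ N = 0 := hac hNnull
  rw [Measure.map_apply hφ hNm, withDensity_apply _ (hφ hNm)] at hmap
  have hv0 : ∀ᵐ x ∂μ, x ∈ φ ⁻¹' N → (‖v x‖₊ : ℝ≥0∞) ^ 2 = 0 :=
    (setLIntegral_eq_zero_iff (hφ hNm) (hv.nnnorm.coe_nnreal_ennreal.pow_const 2)).mp hmap
  filter_upwards [hv0] with x hx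
  by_cases hφx : φ x ∈ N
  · have : v x = 0 := by simpa using hx hφx
    simp [this]
  · have : a (φ x) = b (φ x) := by
      by_contra hne
      exact hφx (subset_toMeasurable _ _ hne)
    rw [this]

/-- Change of variables via an explicit Radon–Nikodym density. -/
lemma lintegral_comp_eq {φ : X → X} (hφ : Measurable φ) {w G q : X → ℝ≥0∞}
    (hw : Measurable w) (hq : Measurable q)
    (hmap : (μ.withDensity w).map φ = μ.withDensity G) (hG : Measurable G) :
    ∫⁻ x, w x * q (φ x) ∂μ = ∫⁻ x, G x * q x ∂μ := by
  calc ∫⁻ x, w x * q (φ x) ∂μ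
      = ∫⁻ x, (w * (q ∘ φ)) x ∂μ := lintegral_congr fun x => rfl
    _ = ∫⁻ x, (q ∘ φ) x ∂(μ.withDensity w) :=
        (lintegral_withDensity_eq_lintegral_mul μ hw (hq.comp hφ)).symm
    _ = ∫⁻ x, q (φ x) ∂(μ.withDensity w) := lintegral_congr fun x => rfl
    _ = ∫⁻ y, q y ∂((μ.withDensity w).map φ) := (lintegral_map hq hφ).symm
    _ = ∫⁻ x, (G * q) x ∂μ := by
        rw [hmap]; exact lintegral_withDensity_eq_lintegral_mul μ hG hq
    _ = ∫⁻ x, G x * q x ∂μ := lintegral_congr fun x => rfl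

/-- A single weighted-composition `MemLp` condition in terms of a lintegral against the
Radon–Nikodym density. -/
lemma cond_iff {φ : X → X} (hφ : Measurable φ) {v : X → ℂ} (hv : Measurable v)
    {G : X → ℝ≥0∞} (hG : Measurable G)
    (hmap : (μ.withDensity fun x => (‖v x‖₊ : ℝ≥0∞) ^ 2).map φ = μ.withDensity G)
    {a g : X → ℂ} (hg : Measurable g) (hag : a =ᵐ[μ] g) :
    MemLp (fun x => v x * a (φ x)) 2 μ ↔ ∫⁻ x, G x * (‖g x‖₊ : ℝ≥0∞) ^ 2 ∂μ < ⊤ := by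
  have hac : (μ.withDensity fun x => (‖v x‖₊ : ℝ≥0∞) ^ 2).map φ ≪ μ := by
    rw [hmap]; exact withDensity_absolutelyContinuous μ G
  have hae := ae_comp_eq hφ hv hac hag
  have hsm : Measurable fun x => v x * g (φ x) := hv.mul (hg.comp hφ)
  rw [memLp_congr_ae hae, memLp_two_iff' hsm.aestronglyMeasurable]
  have : ∫⁻ x, (‖v x * g (φ x)‖₊ : ℝ≥0∞) ^ 2 ∂μ
      = ∫⁻ x, (‖v x‖₊ : ℝ≥0∞) ^ 2 * ((fun y => (‖g y‖₊ : ℝ≥0∞) ^ 2) (φ x)) ∂μ := by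
    refine lintegral_congr fun x => ?_
    simp [nnnorm_mul, mul_pow]
  rw [this, lintegral_comp_eq hφ (hv.nnnorm.coe_nnreal_ennreal.pow_const 2) (hg.nnnorm.coe_nnreal_ennreal.pow_const 2) hmap hG]

/-- Two lintegral finiteness conditions combine into one. -/
lemma pair_lt_top_iff {a b q : X → ℝ≥0∞} (ha : AEMeasurable a μ) (hb : AEMeasurable b μ) (hq : AEMeasurable q μ) :
    (∫⁻ x, a x * q x ∂μ < ⊤ ∧ ∫⁻ x, b x * q x ∂μ < ⊤) ↔
      ∫⁻ x, (a x + b x) * q x ∂μ < ⊤ := by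
  have : ∫⁻ x, (a x + b x) * q x ∂μ = ∫⁻ x, a x * q x ∂μ + ∫⁻ x, b x * q x ∂μ := by
    rw [← lintegral_add_left' (f := fun x => a x * q x) (ha.mul hq)]
    exact lintegral_congr fun x => by ring
  rw [this, ENNReal.add_lt_top]

lemma real_ineq1 {l s : ℝ} (hl0 : 0 < l) (hl1 : l < 1) (hs : 0 ≤ s) :
    l ^ 2 ≤ (l + (1 - l) * s) ^ 2 := by
  nlinarith [mul_nonneg (mul_nonneg hl0.le (sub_nonneg.mpr hl1.le)) hs, sq_nonneg ((1 - l) * s)]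

lemma real_ineq2 {l s : ℝ} (hl0 : 0 < l) (hl1 : l < 1) (hs : 0 ≤ s) :
    (1 - l) ^ 2 * s ^ 2 ≤ (l + (1 - l) * s) ^ 2 := by
  nlinarith [mul_nonneg (mul_nonneg hl0.le (sub_nonneg.mpr hl1.le)) hs, sq_nonneg l]

lemma real_ineq3 {l s : ℝ} : (l + (1 - l) * s) ^ 2 ≤ 2 * l ^ 2 + 2 * ((1 - l) ^ 2 * s ^ 2) := by
  nlinarith [sq_nonneg (l - (1 - l) * s)]

lemma finite_of_le_const_mul {c : ℝ≥0∞} (hc : c ≠ 0) (hctop : c ≠ ⊤) {F T : X → ℝ≥0∞}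
    (hle : ∀ x, c * F x ≤ T x) (hT : ∫⁻ x, T x ∂μ < ⊤) : ∫⁻ x, F x ∂μ < ⊤ := by
  have h1 : c * ∫⁻ x, F x ∂μ ≤ ∫⁻ x, T x ∂μ := by
    rw [← lintegral_const_mul' c F hctop]
    exact lintegral_mono hle
  by_contra htop
  rw [not_lt, top_le_iff] at htop
  rw [htop, ENNReal.mul_top hc] at h1
  exact hT.ne (top_le_iff.mp h1)

/-- The Radon–Nikodym derivative of the pushforward of `h·|v|²μ` vanishes a.e. on `{h = 0}`. -/
lemma rn_zero_on_zero {φ : X → X} (hφ : Measurable φ) {w G h hj : X → ℝ≥0∞}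
    (hw : Measurable w) (hh : Measurable h) (hG : Measurable G)
    (hrnj : (μ.withDensity w).map φ = μ.withDensity hj) (hle : ∀ x, hj x ≤ h x)
    (hmapG : (μ.withDensity fun x => h x * w x).map φ = μ.withDensity G) :
    ∀ᵐ x ∂μ, h x = 0 → G x = 0 := by
  set A := {x | h x = 0} with hAdef
  have hA : MeasurableSet A := hh (measurableSet_singleton 0)
  have h1 : ∫⁻ x in A, hj x ∂μ = 0 := by
    have hle2 : ∫⁻ x in A, hj x ∂μ ≤ ∫⁻ x in A, h x ∂μ := lintegral_mono fun x => hle x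
    have hzero : ∫⁻ x in A, h x ∂μ = 0 := by
      rw [setLIntegral_eq_zero_iff hA hh]
      exact Filter.Eventually.of_forall fun x hx => hx
    exact le_antisymm (hzero ▸ hle2) zero_le
  have h3 : ∫⁻ x in φ ⁻¹' A, w x ∂μ = 0 := by
    have : (μ.withDensity w) (φ ⁻¹' A) = 0 := by
      rw [← Measure.map_apply hφ hA, hrnj, withDensity_apply _ hA]
      exact h1
    rwa [withDensity_apply _ (hφ hA)] at this
  have h4 : ∀ᵐ x ∂μ, x ∈ φ ⁻¹' A → w x = 0 :=
    (setLIntegral_eq_zero_iff (hφ hA) hw).mp h3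
  have h5 : ∫⁻ x in A, G x ∂μ = 0 := by
    have e : (μ.withDensity G) A = ∫⁻ x in φ ⁻¹' A, h x * w x ∂μ := by
      rw [← hmapG, Measure.map_apply hφ hA, withDensity_apply _ (hφ hA)]
    rw [withDensity_apply _ hA] at e
    rw [e, setLIntegral_eq_zero_iff (hφ hA) (f := fun x => h x * w x) (hh.mul hw)]
    filter_upwards [h4] with x hx hxA
    rw [hx hxA, mul_zero]
  exact (setLIntegral_eq_zero_iff hA hG).mp h5

/-- The `MemLp` condition for the mean-transform weight. -/
lemma mean_cond_iff [SigmaFinite μ] {φ : X → X} (hφ : Measurable φ) {v : X → ℂ}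
    (hv : Measurable v)
    {h : X → ℝ≥0∞} (hh : Measurable h) {hj : X → ℝ≥0∞} (hhj : Measurable hj)
    (hrnj : (μ.withDensity fun x => (‖v x‖₊ : ℝ≥0∞) ^ 2).map φ = μ.withDensity hj)
    {G : X → ℝ≥0∞} (hG : Measurable G)
    (hmapG : (μ.withDensity fun x => h x * (‖v x‖₊ : ℝ≥0∞) ^ 2).map φ = μ.withDensity G)
    (hfinh : ∀ᵐ x ∂μ, h x < ⊤)
    {l : ℝ} (hl0 : 0 < l) (hl1 : l < 1)
    {a g : X → ℂ} (hg : Measurable g) (hag : a =ᵐ[μ] g) :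
    MemLp (fun x => meanWeight φ v h l x * a (φ x)) 2 μ ↔
      (∫⁻ x, hj x * (‖g x‖₊ : ℝ≥0∞) ^ 2 ∂μ < ⊤ ∧
       ∫⁻ x, (G x * rfun h x) * (‖g x‖₊ : ℝ≥0∞) ^ 2 ∂μ < ⊤) := by
  set w := fun x => (‖v x‖₊ : ℝ≥0∞) ^ 2 with hwdef
  have hw : Measurable w := hv.nnnorm.coe_nnreal_ennreal.pow_const 2
  set s := svalFun φ v h with hsdef
  have hsm : Measurable s := measurable_svalFun hφ hv hh
  have hs0 : ∀ x, 0 ≤ s x := svalFun_nonneg φ v h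
  set c := fun x => s x + l * (1 - s x) with hcdef
  have hcm : Measurable c := hsm.add (measurable_const.mul (measurable_const.sub hsm))
  have hc_eq : ∀ x, c x = l + (1 - l) * s x := fun x => by rw [hcdef]; ring
  set tfun := fun x => ENNReal.ofReal (c x ^ 2) with htdef
  have htm : Measurable tfun := ENNReal.measurable_ofReal.comp (hcm.pow_const 2)
  set sfun := fun x => ENNReal.ofReal (s x ^ 2) with hsfdef
  have hsfm : Measurable sfun := ENNReal.measurable_ofReal.comp (hsm.pow_const 2)
  have hmean : Measurable (meanWeight φ v h l) := by
    rw [meanWeight_eq]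
    exact (Complex.measurable_ofReal.comp hcm).mul hv
  have hwmean : ∀ x, (‖meanWeight φ v h l x‖₊ : ℝ≥0∞) ^ 2 = tfun x * w x := by
    intro x
    rw [meanWeight_eq]
    simp only [nnnorm_mul, ENNReal.coe_mul, mul_pow]
    congr 1
    rw [Complex.nnnorm_real, ← ENNReal.ofReal_coe_nnreal, coe_nnnorm,
      ← ENNReal.ofReal_pow (norm_nonneg _), Real.norm_eq_abs, sq_abs]
  have hacmean : (μ.withDensity fun x => (‖meanWeight φ v h l x‖₊ : ℝ≥0∞) ^ 2).map φ ≪ μ := by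
    have e : (μ.withDensity fun x => (‖meanWeight φ v h l x‖₊ : ℝ≥0∞) ^ 2)
        = (μ.withDensity w).withDensity tfun := by
      rw [← withDensity_mul μ hw htm]
      exact congrArg _ (funext fun x => by rw [hwmean x, Pi.mul_apply, mul_comm])
    rw [e]
    refine ((withDensity_absolutelyContinuous _ _).map hφ).trans ?_
    rw [hrnj]
    exact withDensity_absolutelyContinuous μ hj
  have hae := ae_comp_eq hφ hmean hacmean hag
  have hsmm : Measurable fun x => meanWeight φ v h l x * g (φ x) := hmean.mul (hg.comp hφ)
  rw [memLp_congr_ae hae, memLp_two_iff' hsmm.aestronglyMeasurable]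
  set B := fun x => w x * (‖g (φ x)‖₊ : ℝ≥0∞) ^ 2 with hBdef
  have hBm : Measurable B := hw.mul ((hg.comp hφ).nnnorm.coe_nnreal_ennreal.pow_const 2)
  have hintegrand : (∫⁻ x, (‖meanWeight φ v h l x * g (φ x)‖₊ : ℝ≥0∞) ^ 2 ∂μ)
      = ∫⁻ x, tfun x * B x ∂μ := by
    refine lintegral_congr fun x => ?_
    rw [nnnorm_mul, ENNReal.coe_mul, mul_pow, hwmean x, hBdef]
    ring
  rw [hintegrand]
  have hIB : ∫⁻ x, hj x * (‖g x‖₊ : ℝ≥0∞) ^ 2 ∂μ = ∫⁻ x, B x ∂μ :=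
    (lintegral_comp_eq hφ hw (hg.nnnorm.coe_nnreal_ennreal.pow_const 2) hrnj hhj).symm
  have hIS : ∫⁻ x, (G x * rfun h x) * (‖g x‖₊ : ℝ≥0∞) ^ 2 ∂μ = ∫⁻ x, sfun x * B x ∂μ := by
    have e1 : ∫⁻ x, sfun x * B x ∂μ
        = ∫⁻ x, (fun y => h y * w y) x
            * ((fun y => rfun h y * (‖g y‖₊ : ℝ≥0∞) ^ 2) (φ x)) ∂μ := by
      refine lintegral_congr_ae ?_
      filter_upwards [hfinh] with x hx
      show ENNReal.ofReal (s x ^ 2) * (w x * (‖g (φ x)‖₊ : ℝ≥0∞) ^ 2)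
        = h x * w x * (rfun h (φ x) * (‖g (φ x)‖₊ : ℝ≥0∞) ^ 2)
      by_cases hC : v x ≠ 0 ∧ h x < ⊤ ∧ 0 < h (φ x) ∧ h (φ x) < ⊤
      · have hsx : s x = Real.sqrt ((h x).toReal / (h (φ x)).toReal) := by
          rw [hsdef]; unfold svalFun; rw [if_pos hC]
        have hsq : ENNReal.ofReal (s x ^ 2) = h x / h (φ x) := by
          rw [hsx, Real.sq_sqrt (div_nonneg ENNReal.toReal_nonneg ENNReal.toReal_nonneg),
            ENNReal.ofReal_div_of_pos (ENNReal.toReal_pos hC.2.2.1.ne' hC.2.2.2.ne),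
            ENNReal.ofReal_toReal hx.ne, ENNReal.ofReal_toReal hC.2.2.2.ne]
        have hr : rfun h (φ x) = (h (φ x))⁻¹ := by
          unfold rfun; rw [if_pos ⟨hC.2.2.1, hC.2.2.2⟩]
        rw [hsq, hr, ENNReal.div_eq_inv_mul]
        ring
      · have hsx : s x = 0 := by
          rw [hsdef]; unfold svalFun; rw [if_neg hC]
        rw [hsx]
        norm_num
        by_cases hv0 : v x = 0
        · exact Or.inl (Or.inr (by rw [hwdef]; simp [hv0]))
        · have hnC : ¬(0 < h (φ x) ∧ h (φ x) < ⊤) := by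
            intro hcc
            exact hC ⟨hv0, hx, hcc.1, hcc.2⟩
          have hr : rfun h (φ x) = 0 := by unfold rfun; rw [if_neg hnC]
          exact Or.inr (Or.inl hr)
    rw [e1, lintegral_comp_eq hφ (w := fun y => h y * w y) (q := fun y => rfun h y * (‖g y‖₊ : ℝ≥0∞) ^ 2) (hh.mul hw)
      ((measurable_rfun hh).mul (hg.nnnorm.coe_nnreal_ennreal.pow_const 2)) hmapG hG]
    exact lintegral_congr fun x => by ring
  rw [hIB, hIS]
  constructor
  · intro hfin
    constructor
    · refine finite_of_le_const_mul (c := ENNReal.ofReal (l ^ 2))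
        (ENNReal.ofReal_pos.mpr (by positivity)).ne' ENNReal.ofReal_ne_top ?_ hfin
      intro x
      refine mul_le_mul' (ENNReal.ofReal_le_ofReal ?_) le_rfl
      rw [hc_eq x]
      exact real_ineq1 hl0 hl1 (hs0 x)
    · refine finite_of_le_const_mul (c := ENNReal.ofReal ((1 - l) ^ 2))
        (ENNReal.ofReal_pos.mpr (pow_pos (by linarith) 2)).ne' ENNReal.ofReal_ne_top ?_ hfin
      intro x
      show ENNReal.ofReal ((1 - l) ^ 2) * (ENNReal.ofReal (s x ^ 2) * B x)
        ≤ ENNReal.ofReal (c x ^ 2) * B x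
      rw [← mul_assoc, ← ENNReal.ofReal_mul (by positivity)]
      refine mul_le_mul' (ENNReal.ofReal_le_ofReal ?_) le_rfl
      rw [hc_eq x]
      exact real_ineq2 hl0 hl1 (hs0 x)
  · rintro ⟨hB, hS⟩
    have hle : ∀ x, tfun x * B x
        ≤ ENNReal.ofReal (2 * l ^ 2) * B x
          + ENNReal.ofReal (2 * (1 - l) ^ 2) * (sfun x * B x) := by
      intro x
      have hreal : c x ^ 2 ≤ 2 * l ^ 2 + 2 * ((1 - l) ^ 2 * s x ^ 2) := by
        rw [hc_eq x]
        exact real_ineq3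
      calc tfun x * B x
          ≤ (ENNReal.ofReal (2 * l ^ 2)
              + ENNReal.ofReal (2 * (1 - l) ^ 2) * sfun x) * B x := by
            refine mul_le_mul' ?_ le_rfl
            show ENNReal.ofReal (c x ^ 2)
              ≤ ENNReal.ofReal (2 * l ^ 2) + ENNReal.ofReal (2 * (1 - l) ^ 2) * ENNReal.ofReal (s x ^ 2)
            rw [← ENNReal.ofReal_mul (by positivity),
              ← ENNReal.ofReal_add (by positivity) (by positivity)]
            refine ENNReal.ofReal_le_ofReal ?_
            calc c x ^ 2 ≤ 2 * l ^ 2 + 2 * ((1 - l) ^ 2 * s x ^ 2) := hreal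
              _ = 2 * l ^ 2 + 2 * (1 - l) ^ 2 * s x ^ 2 := by ring
        _ = ENNReal.ofReal (2 * l ^ 2) * B x
              + ENNReal.ofReal (2 * (1 - l) ^ 2) * (sfun x * B x) := by ring
    refine lt_of_le_of_lt (lintegral_mono hle) ?_
    rw [lintegral_add_left' (hBm.const_mul _).aemeasurable _]
    refine ENNReal.add_lt_top.mpr ⟨?_, ?_⟩
    · rw [lintegral_const_mul' _ _ ENNReal.ofReal_ne_top]
      exact ENNReal.mul_lt_top ENNReal.ofReal_lt_top hB
    · rw [lintegral_const_mul' _ _ ENNReal.ofReal_ne_top]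
      exact ENNReal.mul_lt_top ENNReal.ofReal_lt_top hS

end SMTaux

open SMTaux

/-- **Proposition 4.16 for `k = 2`**: for `λ ∈ (0,1)`, the pair power
`(C_{φ₁,ω₁}, C_{φ₂,ω₂})²` is densely defined if and only if the λ-spherical mean
transform of the pair is densely defined. -/
theorem stmt_12
    {X : Type*} [MeasurableSpace X] (μ : Measure X) [SigmaFinite μ]
    (φ₁ φ₂ : X → X) (ω₁ ω₂ : X → ℂ)
    (hφ₁ : Measurable φ₁) (hφ₂ : Measurable φ₂)
    (hω₁ : Measurable ω₁) (hω₂ : Measurable ω₂)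
    (h₁ h₂ : X → ℝ≥0∞) (hh₁ : Measurable h₁) (hh₂ : Measurable h₂)
    -- `C_{φᵢ,ωᵢ}` is well defined with Radon–Nikodym derivative `hᵢ`
    (hrn₁ : (μ.withDensity fun x => (‖ω₁ x‖₊ : ℝ≥0∞) ^ 2).map φ₁ = μ.withDensity h₁)
    (hrn₂ : (μ.withDensity fun x => (‖ω₂ x‖₊ : ℝ≥0∞) ^ 2).map φ₂ = μ.withDensity h₂)
    -- `C_{φᵢ,ωᵢ}` is densely defined, i.e. `hᵢ < ∞` a.e. `[μ]`
    (hfin₁ : ∀ᵐ x ∂μ, h₁ x < ⊤) (hfin₂ : ∀ᵐ x ∂μ, h₂ x < ⊤)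
    (l : ℝ) (hl : l ∈ Set.Ioo (0 : ℝ) 1) :
    Dense {f : Lp ℂ 2 μ |
        (MemLp (fun x => ω₁ x * f (φ₁ x)) 2 μ ∧
         MemLp (fun x => ω₂ x * f (φ₂ x)) 2 μ) ∧
        (MemLp (fun x => ω₁ x * (ω₁ (φ₁ x) * f (φ₁ (φ₁ x)))) 2 μ ∧
         MemLp (fun x => ω₁ x * (ω₂ (φ₁ x) * f (φ₂ (φ₁ x)))) 2 μ ∧
         MemLp (fun x => ω₂ x * (ω₁ (φ₂ x) * f (φ₁ (φ₂ x)))) 2 μ ∧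
         MemLp (fun x => ω₂ x * (ω₂ (φ₂ x) * f (φ₂ (φ₂ x)))) 2 μ)} ↔
    Dense {f : Lp ℂ 2 μ |
        MemLp (fun x => meanWeight φ₁ ω₁ (fun y => h₁ y + h₂ y) l x * f (φ₁ x)) 2 μ ∧
        MemLp (fun x => meanWeight φ₂ ω₂ (fun y => h₁ y + h₂ y) l x * f (φ₂ x)) 2 μ} := by
  obtain ⟨hl0, hl1⟩ := hl
  set w₁ : X → ℝ≥0∞ := fun x => (‖ω₁ x‖₊ : ℝ≥0∞) ^ 2 with hw₁def
  set w₂ : X → ℝ≥0∞ := fun x => (‖ω₂ x‖₊ : ℝ≥0∞) ^ 2 with hw₂def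
  have hw₁ : Measurable w₁ := hω₁.nnnorm.coe_nnreal_ennreal.pow_const 2
  have hw₂ : Measurable w₂ := hω₂.nnnorm.coe_nnreal_ennreal.pow_const 2
  set h : X → ℝ≥0∞ := fun y => h₁ y + h₂ y with hhdef
  have hh : Measurable h := hh₁.add hh₂
  have hfinh : ∀ᵐ x ∂μ, h x < ⊤ := by
    filter_upwards [hfin₁, hfin₂] with x a b
    exact ENNReal.add_lt_top.mpr ⟨a, b⟩
  -- Radon–Nikodym derivatives for the second-order pushforwards
  have hmapH : ∀ (φ0 : X → X), Measurable φ0 → ∀ (w0 : X → ℝ≥0∞), Measurable w0 →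
      ∀ (hj : X → ℝ≥0∞), (μ.withDensity w0).map φ0 = μ.withDensity hj →
      ∃ H : X → ℝ≥0∞, Measurable H ∧
        (μ.withDensity fun x => h x * w0 x).map φ0 = μ.withDensity H := by
    intro φ0 hφ0 w0 hw0 hj hrn0
    have hac : (μ.withDensity fun x => h x * w0 x).map φ0 ≪ μ := by
      have e : (μ.withDensity fun x => h x * w0 x) = (μ.withDensity w0).withDensity h := by
        rw [← withDensity_mul μ hw0 hh]
        exact congrArg _ (funext fun x => mul_comm _ _)
      rw [e]
      refine ((withDensity_absolutelyContinuous _ _).map hφ0).trans ?_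
      rw [hrn0]
      exact withDensity_absolutelyContinuous μ hj
    exact ⟨((μ.withDensity fun x => h x * w0 x).map φ0).rnDeriv μ,
      Measure.measurable_rnDeriv _ _, (Measure.withDensity_rnDeriv_eq _ _ hac).symm⟩
  obtain ⟨H₁, hmH₁, hmapH₁⟩ := hmapH φ₁ hφ₁ w₁ hw₁ h₁ hrn₁
  obtain ⟨H₂, hmH₂, hmapH₂⟩ := hmapH φ₂ hφ₂ w₂ hw₂ h₂ hrn₂
  -- the derivatives vanish a.e. on `{h = 0}`
  have hz₁ : ∀ᵐ x ∂μ, h x = 0 → H₁ x = 0 :=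
    rn_zero_on_zero hφ₁ hw₁ hh hmH₁ hrn₁ (fun x => le_self_add) hmapH₁
  have hz₂ : ∀ᵐ x ∂μ, h x = 0 → H₂ x = 0 :=
    rn_zero_on_zero hφ₂ hw₂ hh hmH₂ hrn₂ (fun x => le_add_self) hmapH₂
  -- the two comparison densities
  set Ga : X → ℝ≥0∞ := fun x => h x + (H₁ x + H₂ x) with hGadef
  set Gb : X → ℝ≥0∞ := fun x => h x + (H₁ x * rfun h x + H₂ x * rfun h x) with hGbdef
  have hGa : Measurable Ga := hh.add (hmH₁.add hmH₂)
  have hGb : Measurable Gb :=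
    hh.add ((hmH₁.mul (measurable_rfun hh)).add (hmH₂.mul (measurable_rfun hh)))
  -- identification of the first set
  have hseta : {f : Lp ℂ 2 μ |
        (MemLp (fun x => ω₁ x * f (φ₁ x)) 2 μ ∧
         MemLp (fun x => ω₂ x * f (φ₂ x)) 2 μ) ∧
        (MemLp (fun x => ω₁ x * (ω₁ (φ₁ x) * f (φ₁ (φ₁ x)))) 2 μ ∧
         MemLp (fun x => ω₁ x * (ω₂ (φ₁ x) * f (φ₂ (φ₁ x)))) 2 μ ∧
         MemLp (fun x => ω₂ x * (ω₁ (φ₂ x) * f (φ₁ (φ₂ x)))) 2 μ ∧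
         MemLp (fun x => ω₂ x * (ω₂ (φ₂ x) * f (φ₂ (φ₂ x)))) 2 μ)}
      = {f : Lp ℂ 2 μ | ∫⁻ x, (‖f x‖₊ : ℝ≥0∞) ^ 2 * Ga x ∂μ < ⊤} := by
    ext f
    simp only [Set.mem_setOf_eq]
    obtain ⟨g, hgsm, hfg⟩ := Lp.aestronglyMeasurable f
    have hgm : Measurable g := hgsm.measurable
    have hqm : Measurable fun x => (‖g x‖₊ : ℝ≥0∞) ^ 2 := hgm.nnnorm.coe_nnreal_ennreal.pow_const 2
    have hac₁ : (μ.withDensity fun x => (‖ω₁ x‖₊ : ℝ≥0∞) ^ 2).map φ₁ ≪ μ := by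
      rw [hrn₁]; exact withDensity_absolutelyContinuous μ h₁
    have hac₂ : (μ.withDensity fun x => (‖ω₂ x‖₊ : ℝ≥0∞) ^ 2).map φ₂ ≪ μ := by
      rw [hrn₂]; exact withDensity_absolutelyContinuous μ h₂
    have hae₁ : (fun y => ω₁ y * f (φ₁ y)) =ᵐ[μ] (fun y => ω₁ y * g (φ₁ y)) :=
      ae_comp_eq hφ₁ hω₁ hac₁ hfg
    have hae₂ : (fun y => ω₂ y * f (φ₂ y)) =ᵐ[μ] (fun y => ω₂ y * g (φ₂ y)) :=
      ae_comp_eq hφ₂ hω₂ hac₂ hfg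
    have hgm₁ : Measurable fun y => ω₁ y * g (φ₁ y) := hω₁.mul (hgm.comp hφ₁)
    have hgm₂ : Measurable fun y => ω₂ y * g (φ₂ y) := hω₂.mul (hgm.comp hφ₂)
    refine Iff.trans (and_congr
      (and_congr (cond_iff hφ₁ hω₁ hh₁ hrn₁ hgm hfg) (cond_iff hφ₂ hω₂ hh₂ hrn₂ hgm hfg))
      (and_congr (cond_iff hφ₁ hω₁ hh₁ hrn₁ hgm₁ hae₁)
        (and_congr (cond_iff hφ₁ hω₁ hh₁ hrn₁ hgm₂ hae₂)
          (and_congr (cond_iff hφ₂ hω₂ hh₂ hrn₂ hgm₁ hae₁)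
            (cond_iff hφ₂ hω₂ hh₂ hrn₂ hgm₂ hae₂))))) ?_
    -- regroup and push through the pushforward identities
    have hU1 : ((∫⁻ x, h₁ x * (‖ω₁ x * g (φ₁ x)‖₊ : ℝ≥0∞) ^ 2 ∂μ < ⊤) ∧
        (∫⁻ x, h₂ x * (‖ω₁ x * g (φ₁ x)‖₊ : ℝ≥0∞) ^ 2 ∂μ < ⊤)) ↔
        ∫⁻ x, H₁ x * (‖g x‖₊ : ℝ≥0∞) ^ 2 ∂μ < ⊤ := by
      rw [pair_lt_top_iff hh₁.aemeasurable hh₂.aemeasurable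
        (hgm₁.nnnorm.coe_nnreal_ennreal.pow_const 2).aemeasurable]
      have e : ∫⁻ x, (h₁ x + h₂ x) * (‖ω₁ x * g (φ₁ x)‖₊ : ℝ≥0∞) ^ 2 ∂μ
          = ∫⁻ x, H₁ x * (‖g x‖₊ : ℝ≥0∞) ^ 2 ∂μ := by
        rw [← lintegral_comp_eq hφ₁ (w := fun y => h y * w₁ y) (hh.mul hw₁) hqm hmapH₁ hmH₁]
        refine lintegral_congr fun x => ?_
        rw [nnnorm_mul, ENNReal.coe_mul, mul_pow]
        simp only [hhdef, hw₁def]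
        ring
      rw [e]
    have hU2 : ((∫⁻ x, h₁ x * (‖ω₂ x * g (φ₂ x)‖₊ : ℝ≥0∞) ^ 2 ∂μ < ⊤) ∧
        (∫⁻ x, h₂ x * (‖ω₂ x * g (φ₂ x)‖₊ : ℝ≥0∞) ^ 2 ∂μ < ⊤)) ↔
        ∫⁻ x, H₂ x * (‖g x‖₊ : ℝ≥0∞) ^ 2 ∂μ < ⊤ := by
      rw [pair_lt_top_iff hh₁.aemeasurable hh₂.aemeasurable
        (hgm₂.nnnorm.coe_nnreal_ennreal.pow_const 2).aemeasurable]
      have e : ∫⁻ x, (h₁ x + h₂ x) * (‖ω₂ x * g (φ₂ x)‖₊ : ℝ≥0∞) ^ 2 ∂μ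
          = ∫⁻ x, H₂ x * (‖g x‖₊ : ℝ≥0∞) ^ 2 ∂μ := by
        rw [← lintegral_comp_eq hφ₂ (w := fun y => h y * w₂ y) (hh.mul hw₂) hqm hmapH₂ hmH₂]
        refine lintegral_congr fun x => ?_
        rw [nnnorm_mul, ENNReal.coe_mul, mul_pow]
        simp only [hhdef, hw₂def]
        ring
      rw [e]
    have hsum : ∫⁻ x, (‖f x‖₊ : ℝ≥0∞) ^ 2 * Ga x ∂μ
        = (∫⁻ x, h₁ x * (‖g x‖₊ : ℝ≥0∞) ^ 2 ∂μ + ∫⁻ x, h₂ x * (‖g x‖₊ : ℝ≥0∞) ^ 2 ∂μ)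
          + (∫⁻ x, H₁ x * (‖g x‖₊ : ℝ≥0∞) ^ 2 ∂μ + ∫⁻ x, H₂ x * (‖g x‖₊ : ℝ≥0∞) ^ 2 ∂μ) := by
      have hfq : (fun x => (‖f x‖₊ : ℝ≥0∞) ^ 2 * Ga x) =ᵐ[μ]
          (fun x => (h₁ x * (‖g x‖₊ : ℝ≥0∞) ^ 2 + h₂ x * (‖g x‖₊ : ℝ≥0∞) ^ 2)
            + (H₁ x * (‖g x‖₊ : ℝ≥0∞) ^ 2 + H₂ x * (‖g x‖₊ : ℝ≥0∞) ^ 2)) := by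
        filter_upwards [hfg] with x hx
        rw [hx]
        simp only [hGadef, hhdef]
        ring
      rw [lintegral_congr_ae hfq,
        lintegral_add_left' (f := fun x => h₁ x * (‖g x‖₊ : ℝ≥0∞) ^ 2 + h₂ x * (‖g x‖₊ : ℝ≥0∞) ^ 2) ((hh₁.mul hqm).add (hh₂.mul hqm)).aemeasurable,
        lintegral_add_left' (f := fun x => h₁ x * (‖g x‖₊ : ℝ≥0∞) ^ 2) (hh₁.mul hqm).aemeasurable,
        lintegral_add_left' (f := fun x => H₁ x * (‖g x‖₊ : ℝ≥0∞) ^ 2) (hmH₁.mul hqm).aemeasurable]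
    rw [hsum, ENNReal.add_lt_top, ENNReal.add_lt_top, ENNReal.add_lt_top]
    rw [← hU1, ← hU2]
    tauto
  -- identification of the second set
  have hsetb : {f : Lp ℂ 2 μ |
        MemLp (fun x => meanWeight φ₁ ω₁ (fun y => h₁ y + h₂ y) l x * f (φ₁ x)) 2 μ ∧
        MemLp (fun x => meanWeight φ₂ ω₂ (fun y => h₁ y + h₂ y) l x * f (φ₂ x)) 2 μ}
      = {f : Lp ℂ 2 μ | ∫⁻ x, (‖f x‖₊ : ℝ≥0∞) ^ 2 * Gb x ∂μ < ⊤} := by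
    ext f
    simp only [Set.mem_setOf_eq]
    obtain ⟨g, hgsm, hfg⟩ := Lp.aestronglyMeasurable f
    have hgm : Measurable g := hgsm.measurable
    have hqm : Measurable fun x => (‖g x‖₊ : ℝ≥0∞) ^ 2 := hgm.nnnorm.coe_nnreal_ennreal.pow_const 2
    refine Iff.trans (and_congr
      (mean_cond_iff hφ₁ hω₁ hh hh₁ hrn₁ hmH₁ hmapH₁ hfinh hl0 hl1 hgm hfg)
      (mean_cond_iff hφ₂ hω₂ hh hh₂ hrn₂ hmH₂ hmapH₂ hfinh hl0 hl1 hgm hfg)) ?_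
    have hsum : ∫⁻ x, (‖f x‖₊ : ℝ≥0∞) ^ 2 * Gb x ∂μ
        = (∫⁻ x, h₁ x * (‖g x‖₊ : ℝ≥0∞) ^ 2 ∂μ + ∫⁻ x, h₂ x * (‖g x‖₊ : ℝ≥0∞) ^ 2 ∂μ)
          + (∫⁻ x, (H₁ x * rfun h x) * (‖g x‖₊ : ℝ≥0∞) ^ 2 ∂μ
            + ∫⁻ x, (H₂ x * rfun h x) * (‖g x‖₊ : ℝ≥0∞) ^ 2 ∂μ) := by
      have hfq : (fun x => (‖f x‖₊ : ℝ≥0∞) ^ 2 * Gb x) =ᵐ[μ]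
          (fun x => (h₁ x * (‖g x‖₊ : ℝ≥0∞) ^ 2 + h₂ x * (‖g x‖₊ : ℝ≥0∞) ^ 2)
            + ((H₁ x * rfun h x) * (‖g x‖₊ : ℝ≥0∞) ^ 2
              + (H₂ x * rfun h x) * (‖g x‖₊ : ℝ≥0∞) ^ 2)) := by
        filter_upwards [hfg] with x hx
        rw [hx]
        simp only [hGbdef, hhdef]
        ring
      rw [lintegral_congr_ae hfq,
        lintegral_add_left' (f := fun x => h₁ x * (‖g x‖₊ : ℝ≥0∞) ^ 2 + h₂ x * (‖g x‖₊ : ℝ≥0∞) ^ 2) ((hh₁.mul hqm).add (hh₂.mul hqm)).aemeasurable,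
        lintegral_add_left' (f := fun x => h₁ x * (‖g x‖₊ : ℝ≥0∞) ^ 2) (hh₁.mul hqm).aemeasurable,
        lintegral_add_left' (f := fun x => (H₁ x * rfun h x) * (‖g x‖₊ : ℝ≥0∞) ^ 2) ((hmH₁.mul (measurable_rfun hh)).mul hqm).aemeasurable]
    rw [hsum, ENNReal.add_lt_top, ENNReal.add_lt_top, ENNReal.add_lt_top]
    tauto
  rw [hseta, hsetb, dense_iff_ae_lt_top hGa, dense_iff_ae_lt_top hGb]
  constructor
  · intro ha
    filter_upwards [ha, hfinh] with x hax hhx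
    obtain ⟨-, hH⟩ := ENNReal.add_lt_top.mp hax
    obtain ⟨h1f, h2f⟩ := ENNReal.add_lt_top.mp hH
    refine ENNReal.add_lt_top.mpr ⟨hhx, ENNReal.add_lt_top.mpr ⟨?_, ?_⟩⟩
    · by_cases hc : 0 < h x ∧ h x < ⊤
      · have hr : rfun h x = (h x)⁻¹ := by unfold rfun; rw [if_pos hc]
        rw [hr]
        exact ENNReal.mul_lt_top h1f (ENNReal.inv_lt_top.mpr hc.1)
      · have hr : rfun h x = 0 := by unfold rfun; rw [if_neg hc]
        rw [hr, mul_zero]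
        simp 
    · by_cases hc : 0 < h x ∧ h x < ⊤
      · have hr : rfun h x = (h x)⁻¹ := by unfold rfun; rw [if_pos hc]
        rw [hr]
        exact ENNReal.mul_lt_top h2f (ENNReal.inv_lt_top.mpr hc.1)
      · have hr : rfun h x = 0 := by unfold rfun; rw [if_neg hc]
        rw [hr, mul_zero]
        simp
  · intro hb
    filter_upwards [hb, hfinh, hz₁, hz₂] with x hbx hhx hz1x hz2x
    obtain ⟨-, hH⟩ := ENNReal.add_lt_top.mp hbx
    obtain ⟨h1f, h2f⟩ := ENNReal.add_lt_top.mp hH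
    refine ENNReal.add_lt_top.mpr ⟨hhx, ENNReal.add_lt_top.mpr ⟨?_, ?_⟩⟩
    · by_cases h0 : h x = 0
      · rw [hz1x h0]
        simp
      · have hc : 0 < h x ∧ h x < ⊤ := ⟨pos_iff_ne_zero.mpr h0, hhx⟩
        have hr : rfun h x = (h x)⁻¹ := by unfold rfun; rw [if_pos hc]
        rw [hr] at h1f
        by_contra htop
        rw [not_lt, top_le_iff] at htop
        rw [htop, ENNReal.top_mul (ENNReal.inv_ne_zero.mpr hhx.ne)] at h1f
        exact absurd h1f (lt_irrefl ⊤)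
    · by_cases h0 : h x = 0
      · rw [hz2x h0]
        simp
      · have hc : 0 < h x ∧ h x < ⊤ := ⟨pos_iff_ne_zero.mpr h0, hhx⟩
        have hr : rfun h x = (h x)⁻¹ := by unfold rfun; rw [if_pos hc]
        rw [hr] at h2f
        by_contra htop
        rw [not_lt, top_le_iff] at htop
        rw [htop, ENNReal.top_mul (ENNReal.inv_ne_zero.mpr hhx.ne)] at h2f
        exact absurd h2f (lt_irrefl ⊤)
end

section
/- (Lemma 4.15, case of two factors: well-definedness and pushforward identity for products) For i,j ∈ {1,2}, let ψ := φⱼ∘φᵢ (i.e. x ↦ φⱼ(φᵢ(x))) and w := ωᵢ·(ωⱼ∘φᵢ), so that C_{φᵢ,ωᵢ}∘C_{φⱼ,ωⱼ} = C_{ψ,w} on the domain of the composition. Then: (a) for every Δ ∈ 𝒜, ∫_{ψ⁻¹(Δ)} |w|² dμ = ∫_{φⱼ⁻¹(Δ)} hᵢ·|ωⱼ|² dμ; and (b) the pushforward of the measure |w|² dμ under ψ is absolutely continuous with respect to μ, so that the weighted composition operator C_{ψ,w} is well defined. -/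
open MeasureTheory
open scoped ENNReal NNReal

/-- **Lemma 4.15 (case of two factors)**: for `i,j ∈ {1,2}`, let `ψ := φⱼ∘φᵢ` and
`w := ωᵢ·(ωⱼ∘φᵢ)`, so that `C_{φᵢ,ωᵢ}∘C_{φⱼ,ωⱼ} = C_{ψ,w}`.  Then: (a) for every
measurable `Δ`, `∫_{ψ⁻¹(Δ)} |w|² dμ = ∫_{φⱼ⁻¹(Δ)} hᵢ·|ωⱼ|² dμ`; and (b) the
pushforward of `|w|² dμ` under `ψ` is absolutely continuous with respect to `μ`,
so `C_{ψ,w}` is well defined. -/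
theorem stmt_13
    {X : Type*} [MeasurableSpace X] (μ : Measure X) [SigmaFinite μ]
    (φ : Fin 2 → X → X) (ω : Fin 2 → X → ℂ)
    (hφ : ∀ i, Measurable (φ i)) (hω : ∀ i, Measurable (ω i))
    (h : Fin 2 → X → ℝ≥0∞) (hh : ∀ i, Measurable (h i))
    -- `C_{φᵢ,ωᵢ}` is well defined with Radon–Nikodym derivative `hᵢ`
    (hrn : ∀ i, (μ.withDensity fun x => (‖ω i x‖₊ : ℝ≥0∞) ^ 2).map (φ i) =
      μ.withDensity (h i))
    -- `C_{φᵢ,ωᵢ}` is densely defined, i.e. `hᵢ < ∞` a.e. `[μ]`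
    (hfin : ∀ i, ∀ᵐ x ∂μ, h i x < ⊤) :
    ∀ i j : Fin 2,
      (∀ Δ : Set X, MeasurableSet Δ →
        ∫⁻ x in (fun y => φ j (φ i y)) ⁻¹' Δ,
            (‖ω i x * ω j (φ i x)‖₊ : ℝ≥0∞) ^ 2 ∂μ =
        ∫⁻ x in (φ j) ⁻¹' Δ, h i x * (‖ω j x‖₊ : ℝ≥0∞) ^ 2 ∂μ) ∧
      (μ.withDensity fun x => (‖ω i x * ω j (φ i x)‖₊ : ℝ≥0∞) ^ 2).map
          (fun y => φ j (φ i y)) ≪ μ := by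
  intro i j
  set f : X → ℝ≥0∞ := fun x => (‖ω i x‖₊ : ℝ≥0∞) ^ 2 with hf
  set g : X → ℝ≥0∞ := fun x => (‖ω j x‖₊ : ℝ≥0∞) ^ 2 with hg
  have hfm : Measurable f := ((hω i).nnnorm.coe_nnreal_ennreal).pow_const 2
  have hψ : Measurable (fun y => φ j (φ i y)) := (hφ j).comp (hφ i)
  have hgm : Measurable g := ((hω j).nnnorm.coe_nnreal_ennreal).pow_const 2
  have parta : ∀ Δ : Set X, MeasurableSet Δ →
      ∫⁻ x in (fun y => φ j (φ i y)) ⁻¹' Δ,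
          (‖ω i x * ω j (φ i x)‖₊ : ℝ≥0∞) ^ 2 ∂μ =
      ∫⁻ x in (φ j) ⁻¹' Δ, h i x * (‖ω j x‖₊ : ℝ≥0∞) ^ 2 ∂μ := by
    intro Δ hΔ
    have hS : MeasurableSet ((φ j) ⁻¹' Δ) := (hφ j) hΔ
    set F : X → ℝ≥0∞ := Set.indicator ((φ j) ⁻¹' Δ) g with hF
    have hFm : Measurable F := hgm.indicator hS
    have step1 : ∫⁻ x in (fun y => φ j (φ i y)) ⁻¹' Δ,
        (‖ω i x * ω j (φ i x)‖₊ : ℝ≥0∞) ^ 2 ∂μ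
        = ∫⁻ x, f x * F (φ i x) ∂μ := by
      rw [← lintegral_indicator (hψ hΔ)]
      congr 1
      ext x
      by_cases hx : φ j (φ i x) ∈ Δ <;>
        simp [F, Set.indicator, hx, f, g, nnnorm_mul, mul_pow]
    have step2 : ∫⁻ x, f x * F (φ i x) ∂μ
        = ∫⁻ x, F x ∂((μ.withDensity f).map (φ i)) := by
      have hmul := lintegral_withDensity_eq_lintegral_mul μ hfm (hFm.comp (hφ i))
      simp only [Function.comp, Pi.mul_apply] at hmul
      rw [lintegral_map hFm (hφ i), hmul]
    have step3 : ∫⁻ x, F x ∂((μ.withDensity f).map (φ i))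
        = ∫⁻ x in (φ j) ⁻¹' Δ, h i x * g x ∂μ := by
      rw [hrn i, lintegral_withDensity_eq_lintegral_mul μ (hh i) hFm,
        ← lintegral_indicator hS]
      congr 1
      ext x
      by_cases hx : x ∈ (φ j) ⁻¹' Δ <;> simp [F, Set.indicator, hx]
    exact step1.trans (step2.trans step3)
  refine ⟨parta, Measure.AbsolutelyContinuous.mk ?_⟩
  intro s hs hμs
  rw [Measure.map_apply hψ hs, withDensity_apply _ (hψ hs)]
  have := parta s hs
  rw [this]
  -- `g` vanishes a.e. on `φⱼ⁻¹ s`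
  have hzero : (μ.withDensity g) ((φ j) ⁻¹' s) = 0 := by
    have : ((μ.withDensity g).map (φ j)) s = 0 := by
      rw [hrn j, withDensity_apply _ hs, setLIntegral_measure_zero _ _ hμs]
    rwa [Measure.map_apply (hφ j) hs] at this
  rw [withDensity_apply _ ((hφ j) hs)] at hzero
  have hae : (Set.indicator ((φ j) ⁻¹' s) g) =ᵐ[μ] 0 := by
    rw [← lintegral_eq_zero_iff (hgm.indicator ((hφ j) hs)),
      lintegral_indicator ((hφ j) hs)]
    exact hzero
  rw [← lintegral_indicator ((hφ j) hs)]
  rw [← lintegral_zero]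
  apply lintegral_congr_ae
  filter_upwards [hae] with x hx
  by_cases hxs : x ∈ (φ j) ⁻¹' s
  · simp only [Set.indicator_of_mem hxs] at hx ⊢
    simp [g] at hx
    simp [g, hx]
  · simp [Set.indicator_of_notMem hxs]
end

section
/- (Theorem 5.1) Fix λ ∈ (0,1). The λ-spherical mean transform of the pair equals the pair itself — that is, for i = 1,2 the operators C_{φᵢ,ω_λ^i} and C_{φᵢ,ωᵢ} have the same domain and ω_λ^i·(f∘φᵢ) = ωᵢ·(f∘φᵢ) in L²(μ) for every f in that domain — if and only if (h₁+h₂)∘φᵢ = h₁+h₂ holds μ_{ωᵢ}-a.e. for i = 1,2 (where μ_{ωᵢ} is the measure |ωᵢ|² dμ). -/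
open MeasureTheory
open scoped ENNReal NNReal

private lemma memLp_two_iff_lint {X : Type*} [MeasurableSpace X] {μ : Measure X} {f : X → ℂ}
    (hf : AEStronglyMeasurable f μ) :
    MemLp f 2 μ ↔ ∫⁻ x, (‖f x‖₊ : ℝ≥0∞) ^ 2 ∂μ < ⊤ := by
  have conv : ∫⁻ x, (‖f x‖₊ : ℝ≥0∞) ^ ((2 : ℝ≥0∞).toReal) ∂μ
      = ∫⁻ x, (‖f x‖₊ : ℝ≥0∞) ^ 2 ∂μ := by
    simp_rw [show ((2 : ℝ≥0∞)).toReal = ((2 : ℕ) : ℝ) by simp, ENNReal.rpow_natCast]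
  constructor
  · intro hm
    rw [← conv]
    exact (eLpNorm_lt_top_iff_lintegral_rpow_enorm_lt_top two_ne_zero ENNReal.ofNat_ne_top).mp hm.2
  · intro hlt
    exact ⟨hf, (eLpNorm_lt_top_iff_lintegral_rpow_enorm_lt_top two_ne_zero
      ENNReal.ofNat_ne_top).mpr (by rw [← conv] at hlt; exact hlt)⟩

private lemma lint_comp {X : Type*} [MeasurableSpace X] (μ : Measure X)
    {φ : X → X} {ω : X → ℂ} (hφ : Measurable φ) (hω : Measurable ω)
    {hi : X → ℝ≥0∞} (hhi : Measurable hi)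
    (hrn : (μ.withDensity fun x => (‖ω x‖₊ : ℝ≥0∞) ^ 2).map φ = μ.withDensity hi)
    {f : X → ℂ} (hf : Measurable f) :
    ∫⁻ x, (‖ω x * f (φ x)‖₊ : ℝ≥0∞) ^ 2 ∂μ = ∫⁻ x, (‖f x‖₊ : ℝ≥0∞) ^ 2 * hi x ∂μ := by
  have hden : Measurable fun x => (‖ω x‖₊ : ℝ≥0∞) ^ 2 :=
    (hω.nnnorm.coe_nnreal_ennreal).pow_const 2
  have hg : Measurable fun y => (‖f y‖₊ : ℝ≥0∞) ^ 2 :=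
    (hf.nnnorm.coe_nnreal_ennreal).pow_const 2
  calc ∫⁻ x, (‖ω x * f (φ x)‖₊ : ℝ≥0∞) ^ 2 ∂μ
      = ∫⁻ x, ((fun x => (‖ω x‖₊ : ℝ≥0∞) ^ 2) * fun x => (‖f (φ x)‖₊ : ℝ≥0∞) ^ 2) x ∂μ := by
        apply lintegral_congr; intro x
        simp only [Pi.mul_apply, nnnorm_mul]
        push_cast
        ring
    _ = ∫⁻ x, (‖f (φ x)‖₊ : ℝ≥0∞) ^ 2 ∂(μ.withDensity fun x => (‖ω x‖₊ : ℝ≥0∞) ^ 2) :=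
        (lintegral_withDensity_eq_lintegral_mul μ hden (hg.comp hφ)).symm
    _ = ∫⁻ y, (‖f y‖₊ : ℝ≥0∞) ^ 2 ∂((μ.withDensity fun x => (‖ω x‖₊ : ℝ≥0∞) ^ 2).map φ) :=
        (lintegral_map hg hφ).symm
    _ = ∫⁻ y, (‖f y‖₊ : ℝ≥0∞) ^ 2 ∂(μ.withDensity hi) := by rw [hrn]
    _ = ∫⁻ x, (hi * fun y => (‖f y‖₊ : ℝ≥0∞) ^ 2) x ∂μ :=
        lintegral_withDensity_eq_lintegral_mul μ hhi hg
    _ = _ := by apply lintegral_congr; intro x; simp [Pi.mul_apply, mul_comm]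

private lemma key {X : Type*} [MeasurableSpace X] (μ : Measure X) [SigmaFinite μ]
    {φ : X → X} {ω : X → ℂ} (hφ : Measurable φ) (hω : Measurable ω)
    {h hi : X → ℝ≥0∞} (hh : Measurable h) (hhi : Measurable hi)
    (hle : ∀ x, hi x ≤ h x)
    (hrn : (μ.withDensity fun x => (‖ω x‖₊ : ℝ≥0∞) ^ 2).map φ = μ.withDensity hi)
    (hfin : ∀ᵐ x ∂μ, h x < ⊤)
    {l : ℝ} (hl : l ∈ Set.Ioo (0 : ℝ) 1) :
    ((∀ f : X → ℂ, MemLp f 2 μ →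
        (MemLp (fun x => meanWeight φ ω h l x * f (φ x)) 2 μ ↔
          MemLp (fun x => ω x * f (φ x)) 2 μ)) ∧
      (∀ f : X → ℂ, MemLp f 2 μ → MemLp (fun x => ω x * f (φ x)) 2 μ →
        (fun x => meanWeight φ ω h l x * f (φ x)) =ᵐ[μ] fun x => ω x * f (φ x))) ↔
    (∀ᵐ x ∂(μ.withDensity fun x => (‖ω x‖₊ : ℝ≥0∞) ^ 2), h (φ x) = h x) := by
  have hden : Measurable fun x => (‖ω x‖₊ : ℝ≥0∞) ^ 2 :=
    (hω.nnnorm.coe_nnreal_ennreal).pow_const 2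
  have hdenne : ∀ x, ((‖ω x‖₊ : ℝ≥0∞) ^ 2 ≠ 0 ↔ ω x ≠ 0) := by
    intro x
    simp [pow_eq_zero_iff]
  -- a.e. facts about `h ∘ φ` on the support of `ω`
  have hmap : ∀ᵐ y ∂(μ.withDensity hi), 0 < h y ∧ h y < ⊤ := by
    have h0 : (μ.withDensity hi) (h ⁻¹' {0}) = 0 := by
      rw [withDensity_apply _ (hh (measurableSet_singleton 0))]
      have : ∫⁻ a in h ⁻¹' {0}, hi a ∂μ = ∫⁻ _ in h ⁻¹' {0}, (0 : ℝ≥0∞) ∂μ := by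
        apply setLIntegral_congr_fun (hh (measurableSet_singleton 0))
        intro a ha
        have : h a = 0 := ha
        exact le_antisymm ((hle a).trans this.le) zero_le
      rw [this, lintegral_zero]
    have htop : (μ.withDensity hi) (h ⁻¹' {⊤}) = 0 := by
      refine (withDensity_absolutelyContinuous μ hi) ?_
      have : {x | ¬ h x < ⊤} = h ⁻¹' {⊤} := by
        ext x; simp [lt_top_iff_ne_top]
      rw [← this]
      exact hfin
    have hsub : {y | ¬ (0 < h y ∧ h y < ⊤)} ⊆ h ⁻¹' {0} ∪ h ⁻¹' {⊤} := by
      intro y hy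
      rcases not_and_or.mp hy with hy' | hy'
      · left
        simpa [pos_iff_ne_zero] using hy'
      · right
        simpa [lt_top_iff_ne_top] using hy'
    exact measure_mono_null hsub (measure_union_null h0 htop)
  have hmeasset : MeasurableSet {y | 0 < h y ∧ h y < ⊤} := hh measurableSet_Ioo
  have hmap' : ∀ᵐ x ∂(μ.withDensity fun x => (‖ω x‖₊ : ℝ≥0∞) ^ 2),
      0 < h (φ x) ∧ h (φ x) < ⊤ := by
    rw [← hrn] at hmap
    exact (ae_map_iff hφ.aemeasurable hmeasset).mp hmap
  have hcond : ∀ᵐ x ∂μ, ω x ≠ 0 → 0 < h (φ x) ∧ h (φ x) < ⊤ := by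
    have := (ae_withDensity_iff hden).mp hmap'
    filter_upwards [this] with x hx h0
    exact hx ((hdenne x).mpr h0)
  rw [ae_withDensity_iff hden]
  constructor
  · rintro ⟨-, heq⟩
    obtain ⟨g, hgpos, hgmeas, hgint⟩ := exists_pos_lintegral_lt_of_sigmaFinite μ one_ne_zero
    set F : X → ℝ≥0 := fun x => NNReal.sqrt (g x / (1 + (h x).toNNReal)) with hF
    have hFmeas : Measurable F :=
      NNReal.continuous_sqrt.measurable.comp
        (hgmeas.div (measurable_const.add hh.ennreal_toNNReal))
    set f : X → ℂ := fun x => ((F x : ℝ) : ℂ) with hfdef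
    have hfmeas : Measurable f :=
      Complex.measurable_ofReal.comp (measurable_coe_nnreal_real.comp hFmeas)
    have hnorm : ∀ x, (‖f x‖₊ : ℝ≥0∞) = (F x : ℝ≥0∞) := by
      intro x
      have : ‖f x‖₊ = F x := by
        simp only [hfdef, Complex.nnnorm_real]
        ext
        simp [Real.nnnorm_of_nonneg (F x).coe_nonneg]
      rw [this]
    have hF2 : ∀ x, (‖f x‖₊ : ℝ≥0∞) ^ 2
        = (g x : ℝ≥0∞) / ((1 + (h x).toNNReal : ℝ≥0) : ℝ≥0∞) := by
      intro x
      rw [hnorm x, ← ENNReal.coe_pow, NNReal.sq_sqrt, ENNReal.coe_div]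
      positivity
    have hbound1 : ∀ x, (‖f x‖₊ : ℝ≥0∞) ^ 2 ≤ (g x : ℝ≥0∞) := by
      intro x
      rw [hF2 x]
      refine ENNReal.div_le_of_le_mul ?_
      exact le_mul_of_one_le_right zero_le (by exact_mod_cast le_add_right le_rfl)
    have hbound2 : ∀ᵐ x ∂μ, (‖f x‖₊ : ℝ≥0∞) ^ 2 * h x ≤ (g x : ℝ≥0∞) := by
      filter_upwards [hfin] with x hx
      rw [hF2 x]
      have hne : (1 + (h x).toNNReal : ℝ≥0) ≠ 0 := by positivity
      have h1 : h x ≤ ((1 + (h x).toNNReal : ℝ≥0) : ℝ≥0∞) := by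
        conv_lhs => rw [← ENNReal.coe_toNNReal hx.ne]
        exact_mod_cast le_add_self
      calc (g x : ℝ≥0∞) / ((1 + (h x).toNNReal : ℝ≥0) : ℝ≥0∞) * h x
          ≤ (g x : ℝ≥0∞) / ((1 + (h x).toNNReal : ℝ≥0) : ℝ≥0∞)
            * ((1 + (h x).toNNReal : ℝ≥0) : ℝ≥0∞) := mul_le_mul_right h1 _
        _ = (g x : ℝ≥0∞) := ENNReal.div_mul_cancel
            (by exact_mod_cast hne) ENNReal.coe_ne_top
    have hfL2 : MemLp f 2 μ := by
      rw [memLp_two_iff_lint hfmeas.aestronglyMeasurable]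
      exact lt_of_le_of_lt (lintegral_mono hbound1) (hgint.trans ENNReal.one_lt_top)
    have hdom : MemLp (fun x => ω x * f (φ x)) 2 μ := by
      rw [memLp_two_iff_lint (show AEStronglyMeasurable (fun x => ω x * f (φ x)) μ from
        (hω.mul (hfmeas.comp hφ)).aestronglyMeasurable),
        lint_comp μ hφ hω hhi hrn hfmeas]
      calc ∫⁻ x, (‖f x‖₊ : ℝ≥0∞) ^ 2 * hi x ∂μ ≤ ∫⁻ x, (g x : ℝ≥0∞) ∂μ := by
            apply lintegral_mono_ae
            filter_upwards [hbound2] with x hx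
            exact le_trans (mul_le_mul_right (hle x) _) hx
        _ < ⊤ := hgint.trans ENNReal.one_lt_top
    have hae := heq f hfL2 hdom
    filter_upwards [hae, hcond, hfin] with x hx hcx hfx
    intro hw0
    have hωx : ω x ≠ 0 := (hdenne x).mp hw0
    obtain ⟨hpos, hlt⟩ := hcx hωx
    have hfφ : f (φ x) ≠ 0 := by
      have h1 : 0 < F (φ x) := by
        rw [hF]
        refine NNReal.sqrt_pos.mpr ?_
        rw [pos_iff_ne_zero]
        exact div_ne_zero (hgpos (φ x)).ne' (by positivity)
      simp only [hfdef]
      exact_mod_cast (NNReal.coe_pos.mpr h1).ne'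
    have hmw : meanWeight φ ω h l x = ω x := mul_right_cancel₀ hfφ hx
    have hcondx : ω x ≠ 0 ∧ h x < ⊤ ∧ 0 < h (φ x) ∧ h (φ x) < ⊤ := ⟨hωx, hfx, hpos, hlt⟩
    rw [meanWeight, if_pos hcondx] at hmw
    set s := Real.sqrt ((h x).toReal / (h (φ x)).toReal) with hs
    have hone : ((s + l * (1 - s) : ℝ) : ℂ) = 1 :=
      mul_right_cancel₀ hωx (hmw.trans (one_mul (ω x)).symm)
    have h2 : s + l * (1 - s) = 1 := by exact_mod_cast hone
    have h3 : (1 - l) * (1 - s) = 0 := by linear_combination -h2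
    have hs1 : s = 1 := by
      rcases mul_eq_zero.mp h3 with h4 | h4
      · exact absurd h4 (sub_ne_zero.mpr (ne_of_gt (by linarith [hl.2])).symm)
      · linarith [sub_eq_zero.mp h4]
    have hrat : (h x).toReal / (h (φ x)).toReal = 1 := Real.sqrt_eq_one.mp hs1
    have hφne : (h (φ x)).toReal ≠ 0 := ENNReal.toReal_ne_zero.mpr ⟨hpos.ne', hlt.ne⟩
    rw [div_eq_one_iff_eq hφne] at hrat
    exact ((ENNReal.toReal_eq_toReal_iff' hlt.ne hfx.ne).mp hrat.symm)
  · intro hae'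
    have hae : ∀ᵐ x ∂μ, ω x ≠ 0 → h (φ x) = h x := by
      filter_upwards [hae'] with x hx h0
      exact hx ((hdenne x).mpr h0)
    have hw : meanWeight φ ω h l =ᵐ[μ] ω := by
      filter_upwards [hae, hcond, hfin] with x hx hcx hfx
      by_cases hω0 : ω x = 0
      · simp [meanWeight, hω0]
      · obtain ⟨hpos, hlt⟩ := hcx hω0
        have heqh : h (φ x) = h x := hx hω0
        have hcondx : ω x ≠ 0 ∧ h x < ⊤ ∧ 0 < h (φ x) ∧ h (φ x) < ⊤ := ⟨hω0, hfx, hpos, hlt⟩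
        have hφne : (h (φ x)).toReal ≠ 0 := ENNReal.toReal_ne_zero.mpr ⟨hpos.ne', hlt.ne⟩
        show meanWeight φ ω h l x = ω x
        rw [meanWeight, if_pos hcondx, heqh, div_self (heqh ▸ hφne), Real.sqrt_one]
        norm_num
    constructor
    · intro f _
      have hfg : (fun x => meanWeight φ ω h l x * f (φ x)) =ᵐ[μ]
          fun x => ω x * f (φ x) := by
        filter_upwards [hw] with x hx
        rw [hx]
      exact memLp_congr_ae hfg
    · intro f _ _
      filter_upwards [hw] with x hx
      rw [hx]

/-- **Theorem 5.1**: for `λ ∈ (0,1)`, the λ-spherical mean transform of the pair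
equals the pair itself — i.e. for `i = 1,2` the operators `C_{φᵢ,ω_λ^i}` and
`C_{φᵢ,ωᵢ}` have the same domain and the same values — if and only if
`(h₁+h₂)∘φᵢ = h₁+h₂` holds `μ_{ωᵢ}`-a.e. for `i = 1,2`. -/
theorem stmt_14
    {X : Type*} [MeasurableSpace X] (μ : Measure X) [SigmaFinite μ]
    (φ₁ φ₂ : X → X) (ω₁ ω₂ : X → ℂ)
    (hφ₁ : Measurable φ₁) (hφ₂ : Measurable φ₂)
    (hω₁ : Measurable ω₁) (hω₂ : Measurable ω₂)
    (h₁ h₂ : X → ℝ≥0∞) (hh₁ : Measurable h₁) (hh₂ : Measurable h₂)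
    -- `C_{φᵢ,ωᵢ}` is well defined with Radon–Nikodym derivative `hᵢ`
    (hrn₁ : (μ.withDensity fun x => (‖ω₁ x‖₊ : ℝ≥0∞) ^ 2).map φ₁ = μ.withDensity h₁)
    (hrn₂ : (μ.withDensity fun x => (‖ω₂ x‖₊ : ℝ≥0∞) ^ 2).map φ₂ = μ.withDensity h₂)
    -- `C_{φᵢ,ωᵢ}` is densely defined, i.e. `hᵢ < ∞` a.e. `[μ]`
    (hfin₁ : ∀ᵐ x ∂μ, h₁ x < ⊤) (hfin₂ : ∀ᵐ x ∂μ, h₂ x < ⊤)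
    (l : ℝ) (hl : l ∈ Set.Ioo (0 : ℝ) 1) :
    (((∀ f : X → ℂ, MemLp f 2 μ →
        (MemLp (fun x => meanWeight φ₁ ω₁ (fun y => h₁ y + h₂ y) l x * f (φ₁ x)) 2 μ ↔
          MemLp (fun x => ω₁ x * f (φ₁ x)) 2 μ)) ∧
      (∀ f : X → ℂ, MemLp f 2 μ → MemLp (fun x => ω₁ x * f (φ₁ x)) 2 μ →
        (fun x => meanWeight φ₁ ω₁ (fun y => h₁ y + h₂ y) l x * f (φ₁ x))
          =ᵐ[μ] fun x => ω₁ x * f (φ₁ x))) ∧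
     ((∀ f : X → ℂ, MemLp f 2 μ →
        (MemLp (fun x => meanWeight φ₂ ω₂ (fun y => h₁ y + h₂ y) l x * f (φ₂ x)) 2 μ ↔
          MemLp (fun x => ω₂ x * f (φ₂ x)) 2 μ)) ∧
      (∀ f : X → ℂ, MemLp f 2 μ → MemLp (fun x => ω₂ x * f (φ₂ x)) 2 μ →
        (fun x => meanWeight φ₂ ω₂ (fun y => h₁ y + h₂ y) l x * f (φ₂ x))
          =ᵐ[μ] fun x => ω₂ x * f (φ₂ x)))) ↔
    ((∀ᵐ x ∂(μ.withDensity fun x => (‖ω₁ x‖₊ : ℝ≥0∞) ^ 2),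
        h₁ (φ₁ x) + h₂ (φ₁ x) = h₁ x + h₂ x) ∧
     (∀ᵐ x ∂(μ.withDensity fun x => (‖ω₂ x‖₊ : ℝ≥0∞) ^ 2),
        h₁ (φ₂ x) + h₂ (φ₂ x) = h₁ x + h₂ x)) := by
  have hh : Measurable fun y => h₁ y + h₂ y := hh₁.add hh₂
  have hfin : ∀ᵐ x ∂μ, (fun y => h₁ y + h₂ y) x < ⊤ := by
    filter_upwards [hfin₁, hfin₂] with x hx1 hx2
    exact ENNReal.add_lt_top.mpr ⟨hx1, hx2⟩
  exact and_congr
    (key μ hφ₁ hω₁ hh hh₁ (fun x => le_self_add) hrn₁ hfin hl)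
    (key μ hφ₂ hω₂ hh hh₂ (fun x => le_add_self) hrn₂ hfin hl)
end

section
/- (Corollary 5.3, equivalence (spherical quasinormality) ⟺ (commutation with |𝐂|²)) The following are equivalent: (a) (h₁+h₂)∘φᵢ = h₁+h₂ holds μ_{ωᵢ}-a.e. for i = 1,2 (where μ_{ωᵢ} is the measure |ωᵢ|² dμ); (b) for i = 1,2, the inclusion C_{φᵢ,ωᵢ}∘M_h ⊆ M_h∘C_{φᵢ,ωᵢ} holds, i.e. for every f ∈ L²(μ) such that h·f ∈ L²(μ) and ωᵢ·((h·f)∘φᵢ) ∈ L²(μ), one has ωᵢ·(f∘φᵢ) ∈ L²(μ), h·ωᵢ·(f∘φᵢ) ∈ L²(μ), and ωᵢ·((h·f)∘φᵢ) = h·ωᵢ·(f∘φᵢ) μ-a.e. -/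
open MeasureTheory Set
open scoped ENNReal NNReal

section Stmt15Aux

variable {X : Type*} [MeasurableSpace X] {μ : Measure X}

private lemma rpow_two_int (f : X → ℂ) (μ : Measure X) :
    ∫⁻ x, (‖f x‖₊ : ℝ≥0∞) ^ ((2 : ℝ≥0∞).toReal) ∂μ = ∫⁻ x, (‖f x‖₊ : ℝ≥0∞) ^ 2 ∂μ := by
  simp_rw [ENNReal.toReal_ofNat, ENNReal.rpow_two]

private lemma memLp2_iff {f : X → ℂ} (hf : AEStronglyMeasurable f μ) :
    MemLp f 2 μ ↔ ∫⁻ x, (‖f x‖₊ : ℝ≥0∞) ^ 2 ∂μ < ⊤ := by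
  constructor
  · intro h
    have := lintegral_rpow_enorm_lt_top_of_eLpNorm_lt_top (p := 2) two_ne_zero
      ENNReal.ofNat_ne_top h.2
    simp only [enorm_eq_nnnorm] at this
    rwa [rpow_two_int] at this
  · intro h
    refine ⟨hf, ?_⟩
    rw [eLpNorm_lt_top_iff_lintegral_rpow_enorm_lt_top two_ne_zero ENNReal.ofNat_ne_top]
    simp only [enorm_eq_nnnorm]
    rw [rpow_two_int]
    exact h

variable {φ : X → X} {ω : X → ℂ} {h₁ : X → ℝ≥0∞}

private lemma cov (hφ : Measurable φ) (hω : Measurable ω) (hh₁ : Measurable h₁)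
    (hrn : (μ.withDensity fun x => (‖ω x‖₊ : ℝ≥0∞) ^ 2).map φ = μ.withDensity h₁)
    {g : X → ℝ≥0∞} (hg : Measurable g) :
    ∫⁻ x, (‖ω x‖₊ : ℝ≥0∞) ^ 2 * g (φ x) ∂μ = ∫⁻ x, h₁ x * g x ∂μ := by
  have hw : Measurable fun x => (‖ω x‖₊ : ℝ≥0∞) ^ 2 :=
    (hω.nnnorm.coe_nnreal_ennreal).pow_const 2
  calc ∫⁻ x, (‖ω x‖₊ : ℝ≥0∞) ^ 2 * g (φ x) ∂μ
      = ∫⁻ x, g (φ x) ∂(μ.withDensity fun x => (‖ω x‖₊ : ℝ≥0∞) ^ 2) :=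
        (lintegral_withDensity_eq_lintegral_mul μ hw (hg.comp hφ)).symm
    _ = ∫⁻ x, g x ∂((μ.withDensity fun x => (‖ω x‖₊ : ℝ≥0∞) ^ 2).map φ) :=
        (lintegral_map hg hφ).symm
    _ = ∫⁻ x, g x ∂(μ.withDensity h₁) := by rw [hrn]
    _ = ∫⁻ x, h₁ x * g x ∂μ := lintegral_withDensity_eq_lintegral_mul μ hh₁ hg

private lemma null_comp (hφ : Measurable φ)
    (hrn : (μ.withDensity fun x => (‖ω x‖₊ : ℝ≥0∞) ^ 2).map φ = μ.withDensity h₁)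
    {N : Set X} (hN : μ N = 0) :
    (μ.withDensity fun x => (‖ω x‖₊ : ℝ≥0∞) ^ 2) (φ ⁻¹' N) = 0 := by
  obtain ⟨M, hNM, hMm, hM0⟩ := exists_measurable_superset_of_null hN
  have hmap : ((μ.withDensity fun x => (‖ω x‖₊ : ℝ≥0∞) ^ 2).map φ) M
      = (μ.withDensity fun x => (‖ω x‖₊ : ℝ≥0∞) ^ 2) (φ ⁻¹' M) :=
    Measure.map_apply hφ hMm
  rw [hrn, withDensity_apply _ hMm] at hmap
  have hz : (μ.withDensity fun x => (‖ω x‖₊ : ℝ≥0∞) ^ 2) (φ ⁻¹' M) = 0 := by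
    rw [← hmap]
    exact setLIntegral_measure_zero M h₁ hM0
  exact measure_mono_null (Set.preimage_mono hNM) hz

private lemma ae_comp (hφ : Measurable φ)
    (hrn : (μ.withDensity fun x => (‖ω x‖₊ : ℝ≥0∞) ^ 2).map φ = μ.withDensity h₁)
    {p : X → Prop} (hp : ∀ᵐ x ∂μ, p x) :
    ∀ᵐ x ∂(μ.withDensity fun x => (‖ω x‖₊ : ℝ≥0∞) ^ 2), p (φ x) := by
  rw [ae_iff] at hp ⊢
  exact null_comp hφ hrn hp

private lemma wne {x : X} (hx : ω x ≠ 0) : (‖ω x‖₊ : ℝ≥0∞) ^ 2 ≠ 0 := by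
  simp [pow_eq_zero_iff, hx]

private lemma mul_comp_ae_eq (hφ : Measurable φ) (hω : Measurable ω)
    (hrn : (μ.withDensity fun x => (‖ω x‖₊ : ℝ≥0∞) ^ 2).map φ = μ.withDensity h₁)
    {f g : X → ℂ} (hfg : f =ᵐ[μ] g) :
    (fun x => ω x * f (φ x)) =ᵐ[μ] fun x => ω x * g (φ x) := by
  have hw : Measurable fun x => (‖ω x‖₊ : ℝ≥0∞) ^ 2 :=
    (hω.nnnorm.coe_nnreal_ennreal).pow_const 2
  have h1 : ∀ᵐ x ∂(μ.withDensity fun x => (‖ω x‖₊ : ℝ≥0∞) ^ 2), f (φ x) = g (φ x) :=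
    ae_comp hφ hrn hfg
  rw [ae_withDensity_iff hw] at h1
  filter_upwards [h1] with x hx
  by_cases hωx : ω x = 0
  · simp [hωx]
  · rw [hx (wne hωx)]

set_option maxHeartbeats 1000000 in
private lemma aux (μ : Measure X) [SigmaFinite μ]
    (φ : X → X) (ω : X → ℂ) (hφ : Measurable φ) (hω : Measurable ω)
    (h₁ H : X → ℝ≥0∞) (hh₁ : Measurable h₁) (hH : Measurable H)
    (hle : ∀ x, h₁ x ≤ H x)
    (hrn : (μ.withDensity fun x => (‖ω x‖₊ : ℝ≥0∞) ^ 2).map φ = μ.withDensity h₁)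
    (Hfin : ∀ᵐ x ∂μ, H x < ⊤) :
    (∀ᵐ x ∂(μ.withDensity fun x => (‖ω x‖₊ : ℝ≥0∞) ^ 2), H (φ x) = H x) ↔
    (∀ f : X → ℂ, MemLp f 2 μ →
        MemLp (fun x => (((H x).toReal : ℝ) : ℂ) * f x) 2 μ →
        MemLp (fun x => ω x * ((((H (φ x)).toReal : ℝ) : ℂ) * f (φ x))) 2 μ →
        (MemLp (fun x => ω x * f (φ x)) 2 μ ∧
         MemLp (fun x => (((H x).toReal : ℝ) : ℂ) * (ω x * f (φ x))) 2 μ ∧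
         (fun x => ω x * ((((H (φ x)).toReal : ℝ) : ℂ) * f (φ x)))
            =ᵐ[μ] fun x => (((H x).toReal : ℝ) : ℂ) * (ω x * f (φ x)))) := by
  have hw : Measurable fun x => (‖ω x‖₊ : ℝ≥0∞) ^ 2 :=
    (hω.nnnorm.coe_nnreal_ennreal).pow_const 2
  have hnrm : ∀ᵐ x ∂μ, ((‖(((H x).toReal : ℝ) : ℂ)‖₊ : ℝ≥0∞)) = H x := by
    filter_upwards [Hfin] with x hx
    rw [Complex.nnnorm_real, ← enorm_eq_nnnorm ((H x).toReal), Real.enorm_eq_ofReal ENNReal.toReal_nonneg,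
      ENNReal.ofReal_toReal hx.ne]
  constructor
  · -- (a) → (b)
    intro ha f hf hHf hωHf
    have hfg : f =ᵐ[μ] hf.1.mk f := hf.1.ae_eq_mk
    have hgm : Measurable (hf.1.mk f) := hf.1.stronglyMeasurable_mk.measurable
    -- the a.e. equality (third conclusion)
    have ha' : ∀ᵐ x ∂μ, (‖ω x‖₊ : ℝ≥0∞) ^ 2 ≠ 0 → H (φ x) = H x :=
      (ae_withDensity_iff hw).1 ha
    have hEq : (fun x => ω x * ((((H (φ x)).toReal : ℝ) : ℂ) * f (φ x)))
        =ᵐ[μ] fun x => (((H x).toReal : ℝ) : ℂ) * (ω x * f (φ x)) := by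
      filter_upwards [ha'] with x hx
      by_cases hωx : ω x = 0
      · simp [hωx]
      · rw [hx (wne hωx)]; ring
    refine ⟨?_, hωHf.ae_eq hEq, hEq⟩
    -- first conclusion
    have hcongr : (fun x => ω x * f (φ x)) =ᵐ[μ] fun x => ω x * hf.1.mk f (φ x) :=
      mul_comp_ae_eq hφ hω hrn hfg
    have hasm : AEStronglyMeasurable (fun x => ω x * f (φ x)) μ :=
      ((hω.mul (hgm.comp hφ)).aestronglyMeasurable).congr hcongr.symm
    rw [memLp2_iff hasm]
    have hg2 : Measurable fun y => (‖hf.1.mk f y‖₊ : ℝ≥0∞) ^ 2 :=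
      (hgm.nnnorm.coe_nnreal_ennreal).pow_const 2
    have step1 : ∫⁻ x, (‖ω x * f (φ x)‖₊ : ℝ≥0∞) ^ 2 ∂μ
        = ∫⁻ x, (‖ω x‖₊ : ℝ≥0∞) ^ 2 * (‖hf.1.mk f (φ x)‖₊ : ℝ≥0∞) ^ 2 ∂μ := by
      refine lintegral_congr_ae ?_
      filter_upwards [hcongr] with x hx
      rw [hx, nnnorm_mul, ENNReal.coe_mul, mul_pow]
    have step2 : ∫⁻ x, (‖ω x‖₊ : ℝ≥0∞) ^ 2 * (‖hf.1.mk f (φ x)‖₊ : ℝ≥0∞) ^ 2 ∂μ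
        = ∫⁻ x, h₁ x * (‖hf.1.mk f x‖₊ : ℝ≥0∞) ^ 2 ∂μ := cov hφ hω hh₁ hrn hg2
    have hbound : ∀ x, h₁ x * (‖hf.1.mk f x‖₊ : ℝ≥0∞) ^ 2
        ≤ (‖hf.1.mk f x‖₊ : ℝ≥0∞) ^ 2 + H x ^ 2 * (‖hf.1.mk f x‖₊ : ℝ≥0∞) ^ 2 := by
      intro x
      have h1H : h₁ x ≤ 1 + H x ^ 2 := by
        refine (hle x).trans ?_
        rcases le_total (H x) 1 with h | h
        · exact h.trans le_self_add
        · calc H x = H x * 1 := (mul_one _).symm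
            _ ≤ H x * H x := by gcongr
            _ ≤ 1 + H x ^ 2 := by rw [← sq]; exact le_add_self
      calc h₁ x * (‖hf.1.mk f x‖₊ : ℝ≥0∞) ^ 2
          ≤ (1 + H x ^ 2) * (‖hf.1.mk f x‖₊ : ℝ≥0∞) ^ 2 := mul_le_mul' h1H le_rfl
        _ = (‖hf.1.mk f x‖₊ : ℝ≥0∞) ^ 2 + H x ^ 2 * (‖hf.1.mk f x‖₊ : ℝ≥0∞) ^ 2 := by
            rw [add_mul, one_mul]
    have hterm1 : ∫⁻ x, (‖hf.1.mk f x‖₊ : ℝ≥0∞) ^ 2 ∂μ < ⊤ := by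
      have : ∫⁻ x, (‖hf.1.mk f x‖₊ : ℝ≥0∞) ^ 2 ∂μ = ∫⁻ x, (‖f x‖₊ : ℝ≥0∞) ^ 2 ∂μ := by
        refine lintegral_congr_ae ?_
        filter_upwards [hfg] with x hx
        rw [hx]
      rw [this]
      exact (memLp2_iff hf.1).1 hf
    have hterm2 : ∫⁻ x, H x ^ 2 * (‖hf.1.mk f x‖₊ : ℝ≥0∞) ^ 2 ∂μ < ⊤ := by
      have : ∫⁻ x, H x ^ 2 * (‖hf.1.mk f x‖₊ : ℝ≥0∞) ^ 2 ∂μ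
          = ∫⁻ x, (‖(((H x).toReal : ℝ) : ℂ) * f x‖₊ : ℝ≥0∞) ^ 2 ∂μ := by
        refine lintegral_congr_ae ?_
        filter_upwards [hnrm, hfg] with x hx1 hx2
        rw [nnnorm_mul, ENNReal.coe_mul, mul_pow, hx1, hx2]
      rw [this]
      exact (memLp2_iff hHf.1).1 hHf
    calc ∫⁻ x, (‖ω x * f (φ x)‖₊ : ℝ≥0∞) ^ 2 ∂μ
        = ∫⁻ x, h₁ x * (‖hf.1.mk f x‖₊ : ℝ≥0∞) ^ 2 ∂μ := by rw [step1, step2]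
      _ ≤ ∫⁻ x, ((‖hf.1.mk f x‖₊ : ℝ≥0∞) ^ 2 + H x ^ 2 * (‖hf.1.mk f x‖₊ : ℝ≥0∞) ^ 2) ∂μ :=
          lintegral_mono hbound
      _ = (∫⁻ x, (‖hf.1.mk f x‖₊ : ℝ≥0∞) ^ 2 ∂μ)
          + ∫⁻ x, H x ^ 2 * (‖hf.1.mk f x‖₊ : ℝ≥0∞) ^ 2 ∂μ :=
          lintegral_add_left hg2 _
      _ < ⊤ := ENNReal.add_lt_top.2 ⟨hterm1, hterm2⟩
  · -- (b) → (a)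
    intro hb
    set E : ℕ → Set X := fun n => spanningSets μ n ∩ {x | H x ≤ (n : ℝ≥0∞)} with hE
    have hEmeas : ∀ n, MeasurableSet (E n) := fun n =>
      (measurableSet_spanningSets μ n).inter (hH measurableSet_Iic)
    have hEfin : ∀ n, μ (E n) < ⊤ := fun n =>
      lt_of_le_of_lt (measure_mono inter_subset_left) (measure_spanningSets_lt_top μ n)
    set fn : ℕ → X → ℂ := fun n => (E n).indicator fun _ => (1 : ℂ) with hfn
    have hfnmeas : ∀ n, Measurable (fn n) := fun n => measurable_const.indicator (hEmeas n)
    have hyp1 : ∀ n, MemLp (fn n) 2 μ := fun n =>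
      memLp_indicator_const 2 (hEmeas n) 1 (Or.inr (hEfin n).ne)
    have hHmr : Measurable fun x => (((H x).toReal : ℝ) : ℂ) :=
      Complex.measurable_ofReal.comp hH.ennreal_toReal
    -- pointwise identity for the squared norm of the indicator
    have hfnnorm : ∀ n x, ((‖fn n x‖₊ : ℝ≥0∞)) ^ 2 = (E n).indicator (fun _ => 1) x := by
      intro n x
      by_cases hx : x ∈ E n <;> simp [hfn, hx]
    have hyp2 : ∀ n, MemLp (fun x => (((H x).toReal : ℝ) : ℂ) * fn n x) 2 μ := by
      intro n
      rw [memLp2_iff (f := fun x => (((H x).toReal : ℝ) : ℂ) * fn n x) (hHmr.mul (hfnmeas n)).aestronglyMeasurable]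
      have hb' : ∀ x, (‖(((H x).toReal : ℝ) : ℂ) * fn n x‖₊ : ℝ≥0∞) ^ 2
          ≤ (E n).indicator (fun _ => ((n : ℝ≥0∞)) ^ 2) x := by
        intro x
        by_cases hx : x ∈ E n
        · rw [Set.indicator_of_mem hx]
          have h1 : fn n x = 1 := Set.indicator_of_mem hx _
          rw [h1, mul_one, Complex.nnnorm_real, ← enorm_eq_nnnorm ((H x).toReal),
            Real.enorm_eq_ofReal ENNReal.toReal_nonneg]
          have : ENNReal.ofReal (H x).toReal ≤ (n : ℝ≥0∞) :=
            (ENNReal.ofReal_toReal_le).trans hx.2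
          exact pow_le_pow_left' this 2
        · have h1 : fn n x = 0 := Set.indicator_of_notMem hx _
          rw [h1, mul_zero, Set.indicator_of_notMem hx]
          simp
      calc ∫⁻ x, (‖(((H x).toReal : ℝ) : ℂ) * fn n x‖₊ : ℝ≥0∞) ^ 2 ∂μ
          ≤ ∫⁻ x, (E n).indicator (fun _ => ((n : ℝ≥0∞)) ^ 2) x ∂μ := lintegral_mono hb'
        _ = (n : ℝ≥0∞) ^ 2 * μ (E n) := lintegral_indicator_const (hEmeas n) _
        _ < ⊤ := ENNReal.mul_lt_top (ENNReal.pow_lt_top (ENNReal.natCast_lt_top n)) (hEfin n)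
    have hyp3 : ∀ n, MemLp
        (fun x => ω x * ((((H (φ x)).toReal : ℝ) : ℂ) * fn n (φ x))) 2 μ := by
      intro n
      have hmeas : Measurable fun x => ω x * ((((H (φ x)).toReal : ℝ) : ℂ) * fn n (φ x)) :=
        hω.mul ((hHmr.comp hφ).mul ((hfnmeas n).comp hφ))
      rw [memLp2_iff hmeas.aestronglyMeasurable]
      set G : X → ℝ≥0∞ := fun y =>
        (ENNReal.ofReal (H y).toReal) ^ 2 * (E n).indicator (fun _ => 1) y with hG
      have hGmeas : Measurable G :=
        ((ENNReal.measurable_ofReal.comp hH.ennreal_toReal).pow_const 2).mul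
          (measurable_const.indicator (hEmeas n))
      have hpt : ∀ x, (‖ω x * ((((H (φ x)).toReal : ℝ) : ℂ) * fn n (φ x))‖₊ : ℝ≥0∞) ^ 2
          = (‖ω x‖₊ : ℝ≥0∞) ^ 2 * G (φ x) := by
        intro x
        rw [nnnorm_mul, nnnorm_mul, ENNReal.coe_mul, ENNReal.coe_mul, mul_pow, mul_pow,
          Complex.nnnorm_real, ← enorm_eq_nnnorm ((H (φ x)).toReal),
          Real.enorm_eq_ofReal ENNReal.toReal_nonneg, hG, hfnnorm]
      have hGb : ∀ x, h₁ x * G x ≤ (E n).indicator (fun _ => (n : ℝ≥0∞) ^ 3) x := by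
        intro x
        by_cases hx : x ∈ E n
        · rw [Set.indicator_of_mem hx]
          have hH1 : ENNReal.ofReal (H x).toReal ≤ (n : ℝ≥0∞) :=
            (ENNReal.ofReal_toReal_le).trans hx.2
          have hh1 : h₁ x ≤ (n : ℝ≥0∞) := (hle x).trans hx.2
          have hGx : G x = ENNReal.ofReal (H x).toReal ^ 2 * 1 := by
            simp only [hG]; rw [Set.indicator_of_mem hx]
          calc h₁ x * G x
              ≤ (n : ℝ≥0∞) * ((n : ℝ≥0∞) ^ 2 * 1) := by
                rw [hGx]
                exact mul_le_mul' hh1 (mul_le_mul' (pow_le_pow_left' hH1 2) le_rfl)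
            _ = (n : ℝ≥0∞) ^ 3 := by ring
        · have hGx : G x = 0 := by
            simp only [hG]; rw [Set.indicator_of_notMem hx]; simp
          rw [Set.indicator_of_notMem hx, hGx, mul_zero]
      calc ∫⁻ x, (‖ω x * ((((H (φ x)).toReal : ℝ) : ℂ) * fn n (φ x))‖₊ : ℝ≥0∞) ^ 2 ∂μ
          = ∫⁻ x, (‖ω x‖₊ : ℝ≥0∞) ^ 2 * G (φ x) ∂μ := by
            exact lintegral_congr fun x => hpt x
        _ = ∫⁻ x, h₁ x * G x ∂μ := cov hφ hω hh₁ hrn hGmeas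
        _ ≤ ∫⁻ x, (E n).indicator (fun _ => (n : ℝ≥0∞) ^ 3) x ∂μ := lintegral_mono hGb
        _ = (n : ℝ≥0∞) ^ 3 * μ (E n) := lintegral_indicator_const (hEmeas n) _
        _ < ⊤ := ENNReal.mul_lt_top (ENNReal.pow_lt_top (ENNReal.natCast_lt_top n)) (hEfin n)
    have heq : ∀ n, (fun x => ω x * ((((H (φ x)).toReal : ℝ) : ℂ) * fn n (φ x)))
        =ᵐ[μ] fun x => (((H x).toReal : ℝ) : ℂ) * (ω x * fn n (φ x)) := fun n =>
      (hb (fn n) (hyp1 n) (hyp2 n) (hyp3 n)).2.2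
    -- transfer to μω and combine
    have hac : (μ.withDensity fun x => (‖ω x‖₊ : ℝ≥0∞) ^ 2) ≪ μ :=
      withDensity_absolutelyContinuous μ _
    have hω0 : ∀ᵐ x ∂(μ.withDensity fun x => (‖ω x‖₊ : ℝ≥0∞) ^ 2), ω x ≠ 0 := by
      rw [ae_withDensity_iff hw]
      refine Filter.Eventually.of_forall fun x hx => ?_
      intro h0
      exact hx (by simp [h0])
    have hHfinω : ∀ᵐ x ∂(μ.withDensity fun x => (‖ω x‖₊ : ℝ≥0∞) ^ 2), H x < ⊤ :=
      hac.ae_le Hfin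
    have hHφfinω : ∀ᵐ x ∂(μ.withDensity fun x => (‖ω x‖₊ : ℝ≥0∞) ^ 2), H (φ x) < ⊤ :=
      ae_comp hφ hrn Hfin
    have heqω : ∀ᵐ x ∂(μ.withDensity fun x => (‖ω x‖₊ : ℝ≥0∞) ^ 2), ∀ n,
        ω x * ((((H (φ x)).toReal : ℝ) : ℂ) * fn n (φ x))
          = (((H x).toReal : ℝ) : ℂ) * (ω x * fn n (φ x)) :=
      ae_all_iff.2 fun n => hac.ae_le (heq n)
    filter_upwards [hω0, hHfinω, hHφfinω, heqω] with x hωx hHx hHφx hx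
    obtain ⟨n, hn⟩ : ∃ n, φ x ∈ spanningSets μ n := by
      have : φ x ∈ ⋃ i, spanningSets μ i := by rw [iUnion_spanningSets]; trivial
      exact Set.mem_iUnion.1 this
    obtain ⟨m, hm⟩ := ENNReal.exists_nat_gt hHφx.ne
    set k := max n m with hk
    have hmem : φ x ∈ E k := by
      constructor
      · exact monotone_spanningSets μ (le_max_left n m) hn
      · exact le_trans hm.le (by exact_mod_cast Nat.cast_le.2 (le_max_right n m))
    have h1 : fn k (φ x) = 1 := Set.indicator_of_mem hmem _
    have := hx k
    rw [h1, mul_one, mul_one] at this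
    have hcc : (((H (φ x)).toReal : ℝ) : ℂ) = (((H x).toReal : ℝ) : ℂ) := by
      have : ω x * (((H (φ x)).toReal : ℝ) : ℂ)
          = ω x * (((H x).toReal : ℝ) : ℂ) := by rw [this]; ring
      exact mul_left_cancel₀ hωx this
    have hrr : (H (φ x)).toReal = (H x).toReal := by exact_mod_cast hcc
    exact (ENNReal.toReal_eq_toReal_iff' hHφx.ne hHx.ne).1 hrr

end Stmt15Aux

/-- **Corollary 5.3, (spherical quasinormality) ⟺ (commutation with `|𝐂|²`)**:
with `h := h₁+h₂`, the following are equivalent: (a) `h∘φᵢ = h` `μ_{ωᵢ}`-a.e. for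
`i = 1,2`; (b) for `i = 1,2`, `C_{φᵢ,ωᵢ}∘M_h ⊆ M_h∘C_{φᵢ,ωᵢ}`: for every `f ∈ L²(μ)`
with `h·f ∈ L²(μ)` and `ωᵢ·((h·f)∘φᵢ) ∈ L²(μ)` one has `ωᵢ·(f∘φᵢ) ∈ L²(μ)`,
`h·ωᵢ·(f∘φᵢ) ∈ L²(μ)` and `ωᵢ·((h·f)∘φᵢ) = h·ωᵢ·(f∘φᵢ)` `μ`-a.e. -/
theorem stmt_15
    {X : Type*} [MeasurableSpace X] (μ : Measure X) [SigmaFinite μ]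
    (φ₁ φ₂ : X → X) (ω₁ ω₂ : X → ℂ)
    (hφ₁ : Measurable φ₁) (hφ₂ : Measurable φ₂)
    (hω₁ : Measurable ω₁) (hω₂ : Measurable ω₂)
    (h₁ h₂ : X → ℝ≥0∞) (hh₁ : Measurable h₁) (hh₂ : Measurable h₂)
    -- `C_{φᵢ,ωᵢ}` is well defined with Radon–Nikodym derivative `hᵢ`
    (hrn₁ : (μ.withDensity fun x => (‖ω₁ x‖₊ : ℝ≥0∞) ^ 2).map φ₁ = μ.withDensity h₁)
    (hrn₂ : (μ.withDensity fun x => (‖ω₂ x‖₊ : ℝ≥0∞) ^ 2).map φ₂ = μ.withDensity h₂)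
    -- `C_{φᵢ,ωᵢ}` is densely defined, i.e. `hᵢ < ∞` a.e. `[μ]`
    (hfin₁ : ∀ᵐ x ∂μ, h₁ x < ⊤) (hfin₂ : ∀ᵐ x ∂μ, h₂ x < ⊤) :
    ((∀ᵐ x ∂(μ.withDensity fun x => (‖ω₁ x‖₊ : ℝ≥0∞) ^ 2),
        h₁ (φ₁ x) + h₂ (φ₁ x) = h₁ x + h₂ x) ∧
     (∀ᵐ x ∂(μ.withDensity fun x => (‖ω₂ x‖₊ : ℝ≥0∞) ^ 2),
        h₁ (φ₂ x) + h₂ (φ₂ x) = h₁ x + h₂ x)) ↔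
    ((∀ f : X → ℂ, MemLp f 2 μ →
        MemLp (fun x => (((h₁ x + h₂ x).toReal : ℝ) : ℂ) * f x) 2 μ →
        MemLp (fun x =>
          ω₁ x * ((((h₁ (φ₁ x) + h₂ (φ₁ x)).toReal : ℝ) : ℂ) * f (φ₁ x))) 2 μ →
        (MemLp (fun x => ω₁ x * f (φ₁ x)) 2 μ ∧
         MemLp (fun x =>
           (((h₁ x + h₂ x).toReal : ℝ) : ℂ) * (ω₁ x * f (φ₁ x))) 2 μ ∧
         (fun x => ω₁ x * ((((h₁ (φ₁ x) + h₂ (φ₁ x)).toReal : ℝ) : ℂ) * f (φ₁ x)))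
            =ᵐ[μ] fun x => (((h₁ x + h₂ x).toReal : ℝ) : ℂ) * (ω₁ x * f (φ₁ x)))) ∧
     (∀ f : X → ℂ, MemLp f 2 μ →
        MemLp (fun x => (((h₁ x + h₂ x).toReal : ℝ) : ℂ) * f x) 2 μ →
        MemLp (fun x =>
          ω₂ x * ((((h₁ (φ₂ x) + h₂ (φ₂ x)).toReal : ℝ) : ℂ) * f (φ₂ x))) 2 μ →
        (MemLp (fun x => ω₂ x * f (φ₂ x)) 2 μ ∧
         MemLp (fun x =>
           (((h₁ x + h₂ x).toReal : ℝ) : ℂ) * (ω₂ x * f (φ₂ x))) 2 μ ∧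
         (fun x => ω₂ x * ((((h₁ (φ₂ x) + h₂ (φ₂ x)).toReal : ℝ) : ℂ) * f (φ₂ x)))
            =ᵐ[μ] fun x => (((h₁ x + h₂ x).toReal : ℝ) : ℂ) * (ω₂ x * f (φ₂ x))))) := by
  have Hfin : ∀ᵐ x ∂μ, (h₁ x + h₂ x) < ⊤ := by
    filter_upwards [hfin₁, hfin₂] with x a b using ENNReal.add_lt_top.2 ⟨a, b⟩
  have e₁ := aux μ φ₁ ω₁ hφ₁ hω₁ h₁ (fun x => h₁ x + h₂ x) hh₁ (hh₁.add hh₂)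
    (fun x => le_self_add) hrn₁ Hfin
  have e₂ := aux μ φ₂ ω₂ hφ₂ hω₂ h₂ (fun x => h₁ x + h₂ x) hh₂ (hh₁.add hh₂)
    (fun x => le_add_self) hrn₂ Hfin
  exact and_congr e₁ e₂
end
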